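/- arXiv:1606.02341 — 7 statements merged into one kernel-verified Lean document; each statement's English description precedes it below -/
import Mathlib

section
/- Let K be a number field. There exists a constant κ > 0, depending only on K, such that every principal fractional ideal 𝔞 of K has a generator α satisfying |α|_v ≤ κ·(N𝔞)^{1/d} for every archimedean place v of K, where d = [K:ℚ] and N𝔞 is the absolute norm of 𝔞. -/
open NumberField
open scoped nonZeroDivisors

/-!
Multiplying by units moves the point `mixedEmbedding K β` into the fundamental cone, without
changing the norm. The cone is stable under real scaling, and its elements of norm one form a
bounded set; rescaling by `|N β| ^ (1 / d)` then bounds every `w (u * β)` by a constant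
times `|N β| ^ (1 / d)`.
-/

open NumberField.mixedEmbedding Module

namespace NumberField.mixedEmbedding

variable {K : Type*} [Field K] [NumberField K]

open scoped Classical in
theorem normAtPlace_le_norm (w : InfinitePlace K) (x : mixedSpace K) : normAtPlace w x ≤ ‖x‖ := by
  rw [norm_eq_sup'_normAtPlace]
  exact Finset.le_sup' (fun w ↦ normAtPlace w x) (Finset.mem_univ w)

variable (K) in
theorem fundamentalCone.exists_normAtPlace_le_norm_rpow :
    ∃ B : ℝ, 0 < B ∧ ∀ x ∈ fundamentalCone K, ∀ w : InfinitePlace K,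
      normAtPlace w x ≤ B * mixedEmbedding.norm x ^ ((1 : ℝ) / finrank ℚ K) := by
  classical
  obtain ⟨C, hC⟩ := isBounded_iff_forall_norm_le.mp (isBounded_normLeOne K)
  refine ⟨max C 1, by positivity, fun x hx w ↦ ?_⟩
  have hnorm : 0 < mixedEmbedding.norm x := norm_pos_of_mem hx
  set r := mixedEmbedding.norm x ^ ((1 : ℝ) / finrank ℚ K) with hr_def
  have hr : 0 < r := Real.rpow_pos_of_pos hnorm _
  have hr_pow : r ^ finrank ℚ K = mixedEmbedding.norm x := by
    rw [hr_def, one_div, Real.rpow_inv_natCast_pow hnorm.le finrank_pos.ne']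
  have hmem : r⁻¹ • x ∈ normLeOne K := by
    refine mem_normLeOne.mpr ⟨smul_mem_of_mem hx (inv_ne_zero hr.ne'), ?_⟩
    rw [mixedEmbedding.norm_smul, abs_inv, abs_of_pos hr, inv_pow, hr_pow,
      inv_mul_cancel₀ hnorm.ne']
  have hle : r⁻¹ * normAtPlace w x ≤ max C 1 :=
    calc r⁻¹ * normAtPlace w x = normAtPlace w (r⁻¹ • x) := by
          rw [normAtPlace_smul, abs_inv, abs_of_pos hr]
      _ ≤ ‖r⁻¹ • x‖ := normAtPlace_le_norm w _
      _ ≤ max C 1 := (hC _ hmem).trans (le_max_left C 1)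
  rwa [inv_mul_le_iff₀ hr, mul_comm] at hle

end NumberField.mixedEmbedding

theorem NumberField.exists_unit_mul_le_abs_norm_rpow (K : Type*) [Field K] [NumberField K] :
    ∃ B : ℝ, 0 < B ∧ ∀ β : K, β ≠ 0 → ∃ u : (𝓞 K)ˣ, ∀ w : InfinitePlace K,
      w (u * β) ≤ B * |(Algebra.norm ℚ β : ℝ)| ^ ((1 : ℝ) / finrank ℚ K) := by
  obtain ⟨B, hB, hbound⟩ := fundamentalCone.exists_normAtPlace_le_norm_rpow K
  refine ⟨B, hB, fun β hβ ↦ ?_⟩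
  have hnorm : mixedEmbedding.norm (mixedEmbedding K β) ≠ 0 := by
    simpa [norm_eq_norm] using hβ
  obtain ⟨u, hu⟩ := fundamentalCone.exists_unit_smul_mem hnorm
  refine ⟨u, fun w ↦ ?_⟩
  simpa [unitSMul_smul, norm_unit_smul] using hbound _ hu w

/-- **A "reduced" generator of a principal fractional ideal.**
Let `K` be a number field of degree `d` over `ℚ`. There is a constant `κ > 0`, depending
only on `K`, such that every nonzero principal fractional ideal `I` of `K` has a generator
`α` with `|α|_v ≤ κ · (NI)^(1/d)` for every archimedean place `v` of `K`. -/
theorem reduced_generator_of_principal_fractional_ideal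
    (K : Type*) [Field K] [NumberField K] :
    ∃ κ : ℝ, 0 < κ ∧
      ∀ I : FractionalIdeal (𝓞 K)⁰ K, I ≠ 0 →
        (I : Submodule (𝓞 K) K).IsPrincipal →
          ∃ α : K, FractionalIdeal.spanSingleton (𝓞 K)⁰ α = I ∧
            ∀ v : InfinitePlace K,
              v α ≤ κ * (FractionalIdeal.absNorm I : ℝ) ^
                ((1 : ℝ) / (Module.finrank ℚ K : ℝ)) := by
  obtain ⟨κ, hκ, hbound⟩ := exists_unit_mul_le_abs_norm_rpow K
  refine ⟨κ, hκ, fun I hI hprinc ↦ ?_⟩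
  obtain ⟨β, rfl⟩ := (FractionalIdeal.isPrincipal_iff I).mp hprinc
  obtain ⟨u, hu⟩ := hbound β (by rintro rfl; simp at hI)
  refine ⟨u * β, FractionalIdeal.spanSingleton_eq_spanSingleton.mpr ⟨u⁻¹, ?_⟩, ?_⟩
  · simp [Units.smul_def, Algebra.smul_def]
  · simpa [FractionalIdeal.absNorm_span_singleton] using hu
end

section
/- Let K be a number field of degree d. There exists a constant κ > 0, depending only on K, such that every fractional ideal 𝔞 of K has a ℤ-basis α₁, …, α_d with max over archimedean places v of |α_i|_v at most κ·(N𝔞)^{1/d} for each i. -/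
/-!
Minkowski's convex body theorem, applied to the lattice `I` whose covolume is proportional to
`N I`, gives a nonzero `γ ∈ I` with `|γ|_v ≤ c (N I)^(1/d)` at every archimedean place. Then
`𝔟 = γ I⁻¹` is an integral ideal of norm `|N γ| / N I ≤ c^d`, so it lies in a finite set
depending only on `K`, and `I = γ 𝔟⁻¹`. Multiplying a fixed `ℤ`-basis of `𝔟⁻¹` by `γ` gives a
basis of `I` whose entries are bounded by `c (N I)^(1/d)` times a constant attached to that
finite set.
-/

open NumberField
open scoped nonZeroDivisors

namespace FractionalIdeal

section SpanSingletonMul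

variable {R K : Type*} [CommRing R] [Field K] [Algebra R K] {S : Submonoid R}
  [IsLocalization S K]

noncomputable def spanSingletonMulEquiv (J : FractionalIdeal S K) {γ : K} (hγ : γ ≠ 0) :
    (J : Submodule R K) ≃ₗ[R] (spanSingleton S γ * J : FractionalIdeal S K) :=
  (Submodule.equivMapOfInjective (DistribSMul.toLinearMap R K γ)
    (mul_right_injective₀ hγ) J).trans
    (LinearEquiv.ofEq _ _ (by
      rw [coe_mul, coe_spanSingleton, Submodule.span_singleton_mul,
        Submodule.pointwise_smul_def]))

end SpanSingletonMul

section IsDedekindDomain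

variable {R K : Type*} [CommRing R] [IsDedekindDomain R] [Field K] [Algebra R K]
  [IsFractionRing R K]

theorem absNorm_pos [Module.Free ℤ R] [Module.Finite ℤ R] {I : FractionalIdeal R⁰ K}
    (hI : I ≠ 0) : 0 < absNorm I :=
  (absNorm_nonneg I).lt_of_ne' (absNorm_eq_zero_iff.not.mpr hI)

theorem exists_coeIdeal_eq_spanSingleton_mul_inv {I : FractionalIdeal R⁰ K} {γ : K}
    (hγ : γ ∈ I) : ∃ 𝔟 : Ideal R, (𝔟 : FractionalIdeal R⁰ K) = spanSingleton R⁰ γ * I⁻¹ :=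
  le_one_iff_exists_coeIdeal.mp <| calc
    spanSingleton R⁰ γ * I⁻¹ ≤ I * I⁻¹ := mul_le_mul_left (spanSingleton_le_iff_mem.mpr hγ) _
    _ ≤ 1 := by rw [inv_eq]; exact mul_one_div_le_one

end IsDedekindDomain

end FractionalIdeal

namespace NumberField

open InfinitePlace mixedEmbedding Module
open scoped ENNReal NNReal

variable {K : Type*} [Field K] [NumberField K]

theorem InfinitePlace.abs_norm_le_pow_of_forall_le {x : K} {r : ℝ}
    (h : ∀ w : InfinitePlace K, w x ≤ r) : |(Algebra.norm ℚ x : ℝ)| ≤ r ^ finrank ℚ K := by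
  rw [← Rat.cast_abs, ← prod_eq_abs_norm, ← sum_mult_eq, ← Finset.prod_pow_eq_pow_sum]
  exact Finset.prod_le_prod (fun w _ => pow_nonneg (apply_nonneg w x) _)
    (fun w _ => pow_le_pow_left₀ (apply_nonneg w x) (h w) _)

variable (K) in
theorem mixedEmbedding.minkowskiBound_eq_absNorm_mul (I : (FractionalIdeal (𝓞 K)⁰ K)ˣ) :
    minkowskiBound K I = .ofReal (FractionalIdeal.absNorm I.1) * minkowskiBound K 1 := by
  rw [minkowskiBound, minkowskiBound, volume_fundamentalDomain_fractionalIdealLatticeBasis,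
    volume_fundamentalDomain_fractionalIdealLatticeBasis, Units.val_one,
    FractionalIdeal.absNorm_one, Rat.cast_one, ENNReal.ofReal_one, one_mul, mul_assoc]

theorem mixedEmbedding.exists_ne_zero_mem_lt_of_minkowskiBound_lt
    {I : (FractionalIdeal (𝓞 K)⁰ K)ˣ} {t : ℝ≥0}
    (h : minkowskiBound K I < convexBodyLTFactor K * t ^ finrank ℚ K) :
    ∃ a ∈ (I : FractionalIdeal (𝓞 K)⁰ K), a ≠ 0 ∧ ∀ w : InfinitePlace K, w a < t := by
  refine exists_ne_zero_mem_ideal_lt K I (f := fun _ => t) ?_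
  rwa [convexBodyLT_volume, Finset.prod_pow_eq_pow_sum, sum_mult_eq]

variable (K) in
theorem mixedEmbedding.exists_ne_zero_mem_le_mul_absNorm_rpow :
    ∃ c : ℝ, 0 < c ∧ ∀ I : FractionalIdeal (𝓞 K)⁰ K, I ≠ 0 → ∃ γ ∈ I, γ ≠ 0 ∧
      ∀ w : InfinitePlace K,
        w γ ≤ c * (FractionalIdeal.absNorm I : ℝ) ^ ((1 : ℝ) / finrank ℚ K) := by
  set d := finrank ℚ K
  set c : ℝ≥0 := (minkowskiBound K 1).toNNReal + 1
  refine ⟨c, by positivity, fun I hI => ?_⟩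
  set N : ℝ≥0 := (FractionalIdeal.absNorm I : ℝ).toNNReal
  have hN : N ≠ 0 := by simpa [N] using FractionalIdeal.absNorm_pos hI
  set t : ℝ≥0 := c * N ^ ((1 : ℝ) / d)
  have htd : t ^ d = c ^ d * N := by
    rw [mul_pow, one_div, NNReal.rpow_inv_natCast_pow _ finrank_pos.ne']
  have ht : minkowskiBound K (Units.mk0 I hI) < convexBodyLTFactor K * t ^ d := by
    have hc : (minkowskiBound K 1) < c := by
      rw [← ENNReal.coe_toNNReal (minkowskiBound_lt_top K 1).ne]
      exact_mod_cast lt_add_one _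
    calc minkowskiBound K (Units.mk0 I hI) = N * minkowskiBound K 1 :=
          minkowskiBound_eq_absNorm_mul K _
      _ < N * c := (ENNReal.mul_lt_mul_iff_right (by simpa using hN) ENNReal.coe_ne_top).mpr hc
      _ ≤ N * c ^ d := by
          gcongr
          exact_mod_cast le_self_pow₀ (le_add_self : 1 ≤ c) finrank_pos.ne'
      _ ≤ convexBodyLTFactor K * (N * c ^ d) := by
          exact_mod_cast le_mul_of_one_le_left' (one_le_convexBodyLTFactor K)
      _ = convexBodyLTFactor K * t ^ d := by
          norm_cast
          rw [htd, mul_comm N]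
  obtain ⟨γ, hγI, hγ0, hγ⟩ := exists_ne_zero_mem_lt_of_minkowskiBound_lt ht
  refine ⟨γ, hγI, hγ0, fun w => (hγ w).le.trans_eq ?_⟩
  simp [t, N, FractionalIdeal.absNorm_nonneg I]

theorem absNorm_spanSingleton_mul_inv_le {I : FractionalIdeal (𝓞 K)⁰ K} (hI : I ≠ 0) {γ : K}
    {c : ℝ} (hγ : ∀ w : InfinitePlace K,
      w γ ≤ c * (FractionalIdeal.absNorm I : ℝ) ^ ((1 : ℝ) / finrank ℚ K)) :
    (FractionalIdeal.absNorm (FractionalIdeal.spanSingleton (𝓞 K)⁰ γ * I⁻¹) : ℝ) ≤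
      c ^ finrank ℚ K := by
  have hN : (0 : ℝ) < FractionalIdeal.absNorm I := mod_cast FractionalIdeal.absNorm_pos hI
  rw [map_mul, map_inv₀, FractionalIdeal.absNorm_span_singleton, Rat.cast_mul, Rat.cast_abs,
    Rat.cast_inv, ← div_eq_mul_inv, div_le_iff₀ hN]
  calc _ ≤ (c * (FractionalIdeal.absNorm I : ℝ) ^ ((1 : ℝ) / finrank ℚ K)) ^ finrank ℚ K :=
        abs_norm_le_pow_of_forall_le hγ
    _ = c ^ finrank ℚ K * FractionalIdeal.absNorm I := by
        rw [mul_pow, one_div, Real.rpow_inv_natCast_pow hN.le finrank_pos.ne']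

theorem exists_forall_fractionalIdealBasis_le {s : Set (FractionalIdeal (𝓞 K)⁰ K)}
    (hs : s.Finite) : ∃ C : ℝ, 0 < C ∧ ∀ J ∈ s, ∀ i (w : InfinitePlace K),
      w (fractionalIdealBasis K J i : K) ≤ C := by
  obtain ⟨C, hC⟩ : BddAbove (⋃ J ∈ s, Set.range fun p : _ × InfinitePlace K =>
      p.2 (fractionalIdealBasis K J p.1 : K)) :=
    hs.bddAbove_biUnion.mpr fun _ _ => (Set.finite_range _).bddAbove
  exact ⟨max C 1, by positivity, fun J hJ i w =>
    le_max_of_le_left (hC (Set.mem_biUnion hJ ⟨(i, w), rfl⟩))⟩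

theorem card_eq_finrank_of_basis_fractionalIdeal {ι : Type*} [Fintype ι]
    {I : FractionalIdeal (𝓞 K)⁰ K} (hI : I ≠ 0) (b : Basis ι ℤ I) :
    Fintype.card ι = finrank ℚ K :=
  (finrank_eq_card_basis b).symm.trans
    ((fractionalIdeal_rank K (Units.mk0 I hI)).trans (RingOfIntegers.rank K))

end NumberField

open FractionalIdeal mixedEmbedding Module in
/-- **A "reduced" ℤ-basis of a fractional ideal.**
Let `K` be a number field of degree `d`. There is a constant `κ > 0`, depending only on `K`,
such that every nonzero fractional ideal `I` of `K` has a `ℤ`-basis `α₁, …, α_d` with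
`|αᵢ|_v ≤ κ · (N I)^(1/d)` for every archimedean place `v` and every `i`. -/
theorem reduced_int_basis_of_fractional_ideal
    (K : Type*) [Field K] [NumberField K] :
    ∃ κ : ℝ, 0 < κ ∧
      ∀ I : FractionalIdeal (𝓞 K)⁰ K, I ≠ 0 →
        ∃ b : Module.Basis (Fin (Module.finrank ℚ K)) ℤ (I : Submodule (𝓞 K) K),
          ∀ i, ∀ v : InfinitePlace K,
            v (b i : K) ≤ κ * (FractionalIdeal.absNorm I : ℝ) ^
              ((1 : ℝ) / (Module.finrank ℚ K : ℝ)) := by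
  obtain ⟨c, hc, hsmall⟩ := exists_ne_zero_mem_le_mul_absNorm_rpow K
  obtain ⟨C, hC, hbasis⟩ := exists_forall_fractionalIdealBasis_le
    ((Ideal.finite_setOfPred_absNorm_le (S := 𝓞 K) ⌈c ^ finrank ℚ K⌉₊).image
      fun 𝔟 : Ideal (𝓞 K) => (𝔟 : FractionalIdeal (𝓞 K)⁰ K)⁻¹)
  refine ⟨c * C, mul_pos hc hC, fun I hI => ?_⟩
  obtain ⟨γ, hγI, hγ0, hγ⟩ := hsmall I hI
  obtain ⟨𝔟, h𝔟⟩ := exists_coeIdeal_eq_spanSingleton_mul_inv hγI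
  have h𝔟_norm : Ideal.absNorm 𝔟 ≤ ⌈c ^ finrank ℚ K⌉₊ := by
    have := absNorm_spanSingleton_mul_inv_le hI hγ
    rw [← h𝔟, coeIdeal_absNorm] at this
    exact_mod_cast this.trans (Nat.le_ceil _)
  have hI_eq : spanSingleton _ γ * (𝔟 : FractionalIdeal (𝓞 K)⁰ K)⁻¹ = I := by
    rw [h𝔟, mul_inv, inv_inv, ← mul_assoc, spanSingleton_mul_inv K hγ0, one_mul]
  let b := (fractionalIdealBasis K (𝔟 : FractionalIdeal (𝓞 K)⁰ K)⁻¹).map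
    (((spanSingletonMulEquiv _ hγ0).trans
      (LinearEquiv.ofEq _ _ (congrArg coeToSubmodule hI_eq))).restrictScalars ℤ)
  refine ⟨b.reindex (Fintype.equivFinOfCardEq (card_eq_finrank_of_basis_fractionalIdeal hI b)),
    fun i v => ?_⟩
  have hb : ∀ j, (b j : K) = γ * fractionalIdealBasis K _ j := fun _ => rfl
  rw [Basis.reindex_apply, hb, map_mul, mul_right_comm]
  exact mul_le_mul (hγ v) (hbasis _ ⟨𝔟, h𝔟_norm, rfl⟩ _ v) (apply_nonneg _ _)
    ((apply_nonneg v γ).trans (hγ v))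
end

section
/- (Strassmann's theorem) Let K be a field complete with respect to a nontrivial non-archimedean absolute value |·|, and let f(T) = Σ_{k≥0} a_k T^k be a power series with coefficients in K such that |a_k| → 0 as k → ∞ and not all a_k are zero. Let A = max_k |a_k| and let N = max{k : |a_k| = A}. Then f has at most N zeros α ∈ K with |α| ≤ 1. -/
/-!
Induction on `N`. If `α` is a zero of `f = ∑ a_k Tᵏ` in the unit disc, then
`f(T) = (T - α) g(T)` with `g = ∑ⱼ bⱼ Tʲ`, `bⱼ = ∑ᵢ a_{i+j+1} αⁱ`. By the ultrametric inequality
`‖bⱼ‖ ≤ A` for all `j`, `‖bⱼ‖ < A` for `j ≥ N`, and `b_{N-1} = a_N + α b_N` has norm exactly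
`A`; so the index of `g` is `N - 1` and every zero of `f` other than `α` is a zero of `g`. For
`N = 0` the same computation gives `‖f(α)‖ = ‖a₀‖ ≠ 0`, so there are no zeros.
-/

open Filter Topology

namespace IsUltrametricDist

variable {E : Type*} [SeminormedAddCommGroup E] [IsUltrametricDist E]

/-- A finite partial sum close enough to a nonzero `∑' i, f i` has the same norm, and the norm of
a finite sum is bounded by that of one of its terms. -/
theorem exists_norm_tsum_le {ι : Type*} [Nonempty ι] (f : ι → E) :
    ∃ i, ‖∑' i, f i‖ ≤ ‖f i‖ := by
  set S := ∑' i, f i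
  rcases eq_or_ne ‖S‖ 0 with hS | hS
  · exact ⟨Classical.arbitrary ι, hS ▸ norm_nonneg _⟩
  have hf : Summable f := by
    by_contra hf
    exact hS (by simp [S, tsum_eq_zero_of_not_summable hf])
  obtain ⟨s, hs⟩ : ∃ s : Finset ι, ‖S - ∑ i ∈ s, f i‖ < ‖S‖ := by
    obtain ⟨s, hs⟩ := ((tendsto_iff_norm_sub_tendsto_zero.mp hf.hasSum).eventually
      (gt_mem_nhds (lt_of_le_of_ne (norm_nonneg S) (Ne.symm hS)))).exists
    exact ⟨s, by rwa [norm_sub_rev]⟩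
  obtain ⟨i, -, hi⟩ := exists_norm_finsetSum_le s f
  refine ⟨i, le_trans ?_ hi⟩
  have hmax := norm_add_le_max (S - ∑ i ∈ s, f i) (∑ i ∈ s, f i)
  rw [sub_add_cancel] at hmax
  exact (le_max_iff.mp hmax).resolve_left hs.not_ge

end IsUltrametricDist

namespace Strassmann

variable {K : Type*} [NormedField K]

theorem norm_mul_pow_le {x α : K} (hα : ‖α‖ ≤ 1) (k : ℕ) : ‖x * α ^ k‖ ≤ ‖x‖ := by
  rw [norm_mul, norm_pow]
  exact mul_le_of_le_one_right (norm_nonneg x) (pow_le_one₀ (norm_nonneg α) hα)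

variable {a : ℕ → K} {α β : K}

/-- `tail a α k = ∑ᵢ a (i + k) αⁱ`. If `f = ∑ₖ a k Tᵏ`, then `tail a α 0 = f α` and
`∑ⱼ tail a α (j + 1) Tʲ` is the quotient of `f - f α` by `T - α`. -/
noncomputable def tail (a : ℕ → K) (α : K) (k : ℕ) : K :=
  ∑' i, a (i + k) * α ^ i

theorem tail_zero : tail a α 0 = ∑' k, a k * α ^ k := rfl

structure IsStrassmannIndex (a : ℕ → K) (N : ℕ) : Prop where
  ne_zero : a N ≠ 0
  norm_le : ∀ k, ‖a k‖ ≤ ‖a N‖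
  norm_lt : ∀ k, N < k → ‖a k‖ < ‖a N‖

def unitDiscZeros (a : ℕ → K) : Set K :=
  {α | ‖α‖ ≤ 1 ∧ HasSum (fun k => a k * α ^ k) 0}

variable {N : ℕ} [IsUltrametricDist K]

theorem exists_norm_tail_le (hα : ‖α‖ ≤ 1) (k : ℕ) : ∃ i, ‖tail a α k‖ ≤ ‖a (i + k)‖ :=
  let ⟨i, hi⟩ := IsUltrametricDist.exists_norm_tsum_le fun i => a (i + k) * α ^ i
  ⟨i, hi.trans (norm_mul_pow_le hα i)⟩

theorem norm_tail_lt (hN : IsStrassmannIndex a N) (hα : ‖α‖ ≤ 1) {k : ℕ} (hk : N < k) :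
    ‖tail a α k‖ < ‖a N‖ :=
  let ⟨i, hi⟩ := exists_norm_tail_le (a := a) hα k
  hi.trans_lt (hN.norm_lt _ (by omega))

theorem norm_tail_le (hN : IsStrassmannIndex a N) (hα : ‖α‖ ≤ 1) (k : ℕ) :
    ‖tail a α k‖ ≤ ‖a N‖ :=
  let ⟨_, hi⟩ := exists_norm_tail_le (a := a) hα k
  hi.trans (hN.norm_le _)

theorem tendsto_tail (ha : Tendsto a atTop (𝓝 0)) (hα : ‖α‖ ≤ 1) :
    Tendsto (tail a α) atTop (𝓝 0) := by
  simp only [Metric.tendsto_atTop, dist_zero_right] at ha ⊢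
  intro ε hε
  obtain ⟨M, hM⟩ := ha ε hε
  refine ⟨M, fun k hk => ?_⟩
  obtain ⟨i, hi⟩ := exists_norm_tail_le (a := a) hα k
  exact hi.trans_lt (hM (i + k) (by omega))

variable [CompleteSpace K]

theorem summable_mul_pow (ha : Tendsto a atTop (𝓝 0)) (hα : ‖α‖ ≤ 1) :
    Summable fun k => a k * α ^ k := by
  refine NonarchimedeanAddGroup.summable_of_tendsto_cofinite_zero ?_
  rw [Nat.cofinite_eq_atTop]
  exact squeeze_zero_norm (fun k => norm_mul_pow_le hα k)
    (tendsto_zero_iff_norm_tendsto_zero.mp ha)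

theorem tail_eq_add (ha : Tendsto a atTop (𝓝 0)) (hα : ‖α‖ ≤ 1) (k : ℕ) :
    tail a α k = a k + α * tail a α (k + 1) := by
  have hs : Summable fun i => a (i + k) * α ^ i :=
    summable_mul_pow (ha.comp (tendsto_add_atTop_nat k)) hα
  rw [tail, hs.tsum_eq_zero_add, tail, ← tsum_mul_left]
  simp only [zero_add, pow_zero, mul_one, pow_succ]
  congr 1
  exact tsum_congr fun i => by rw [add_right_comm, add_assoc]; ring

theorem tsum_eq_add_mul_tsum_tail (ha : Tendsto a atTop (𝓝 0)) (hα : ‖α‖ ≤ 1) (hβ : ‖β‖ ≤ 1) :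
    ∑' k, a k * β ^ k = ∑' k, a k * α ^ k + (β - α) * ∑' j, tail a α (j + 1) * β ^ j := by
  set G := ∑' j, tail a α (j + 1) * β ^ j
  have ht := tendsto_tail ha hα
  have hF : Summable fun k => tail a α k * β ^ k := summable_mul_pow ht hβ
  have hG : Summable fun j => tail a α (j + 1) * β ^ j :=
    summable_mul_pow (ht.comp (tendsto_add_atTop_nat 1)) hβ
  have hF_eq : ∑' k, tail a α k * β ^ k = tail a α 0 + β * G := by
    rw [hF.tsum_eq_zero_add, ← tsum_mul_left]
    simp only [pow_zero, mul_one]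
    congr 1
    exact tsum_congr fun j => by ring
  calc ∑' k, a k * β ^ k
      = ∑' k, (tail a α k * β ^ k - α * (tail a α (k + 1) * β ^ k)) :=
        tsum_congr fun k => by rw [tail_eq_add ha hα k]; ring
    _ = tail a α 0 + β * G - α * G := by rw [hF.tsum_sub (hG.mul_left α), tsum_mul_left, hF_eq]
    _ = ∑' k, a k * α ^ k + (β - α) * G := by rw [tail_zero]; ring

theorem norm_tail_eq (hN : IsStrassmannIndex a N) (ha : Tendsto a atTop (𝓝 0)) (hα : ‖α‖ ≤ 1) :
    ‖tail a α N‖ = ‖a N‖ := by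
  have hlt : ‖α * tail a α (N + 1)‖ < ‖a N‖ := by
    rw [norm_mul]
    exact (mul_le_of_le_one_left (norm_nonneg _) hα).trans_lt (norm_tail_lt hN hα N.lt_succ_self)
  rw [tail_eq_add ha hα, IsUltrametricDist.norm_add_eq_max_of_norm_ne_norm hlt.ne',
    max_eq_left hlt.le]

theorem IsStrassmannIndex.tail (hN : IsStrassmannIndex a (N + 1)) (ha : Tendsto a atTop (𝓝 0))
    (hα : ‖α‖ ≤ 1) : IsStrassmannIndex (fun j => tail a α (j + 1)) N where
  ne_zero := norm_ne_zero_iff.mp (norm_tail_eq hN ha hα ▸ norm_ne_zero_iff.mpr hN.ne_zero)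
  norm_le k := norm_tail_eq hN ha hα ▸ norm_tail_le hN hα (k + 1)
  norm_lt k hk := norm_tail_eq hN ha hα ▸ norm_tail_lt hN hα (by omega)

theorem unitDiscZeros_eq_empty (hN : IsStrassmannIndex a 0) (ha : Tendsto a atTop (𝓝 0)) :
    unitDiscZeros a = ∅ := by
  refine Set.eq_empty_of_forall_notMem fun α ⟨hα, hf⟩ => hN.ne_zero ?_
  rw [← norm_eq_zero, ← norm_tail_eq hN ha hα, tail_zero, hf.tsum_eq, norm_zero]

theorem unitDiscZeros_subset_insert (ha : Tendsto a atTop (𝓝 0)) (hα : α ∈ unitDiscZeros a) :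
    unitDiscZeros a ⊆ insert α (unitDiscZeros fun j => tail a α (j + 1)) := by
  rintro β ⟨hβ, hf⟩
  have hG := summable_mul_pow ((tendsto_tail ha hα.1).comp (tendsto_add_atTop_nat 1)) hβ
  have hfactor := tsum_eq_add_mul_tsum_tail ha hα.1 hβ
  rw [hf.tsum_eq, hα.2.tsum_eq, zero_add, eq_comm, mul_eq_zero, sub_eq_zero] at hfactor
  rcases hfactor with rfl | hG_zero
  · exact Set.mem_insert β _
  · exact Or.inr ⟨hβ, hG_zero ▸ hG.hasSum⟩

theorem encard_unitDiscZeros_le (ha : Tendsto a atTop (𝓝 0)) (hN : IsStrassmannIndex a N) :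
    (unitDiscZeros a).encard ≤ N := by
  induction N generalizing a with
  | zero => simp [unitDiscZeros_eq_empty hN ha]
  | succ N ih =>
    obtain hempty | ⟨α, hα⟩ := (unitDiscZeros a).eq_empty_or_nonempty
    · simp [hempty]
    calc (unitDiscZeros a).encard
        ≤ (insert α (unitDiscZeros fun j => tail a α (j + 1))).encard :=
          Set.encard_le_encard (unitDiscZeros_subset_insert ha hα)
      _ ≤ (unitDiscZeros fun j => tail a α (j + 1)).encard + 1 := Set.encard_insert_le _ _
      _ ≤ N + 1 := by
          gcongr
          exact ih (tendsto_tail ha hα.1 |>.comp (tendsto_add_atTop_nat 1)) (hN.tail ha hα.1)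

end Strassmann

/-- **Strassmann's theorem.**
Let `K` be a field complete with respect to a nontrivial non-archimedean absolute value,
and let `f(T) = Σ_{k≥0} a k * T^k` be a power series over `K` with `‖a k‖ → 0` and not all
`a k` zero.  Let `A = max_k ‖a k‖` and `N = max {k | ‖a k‖ = A}`.  Then `f` has at most `N`
zeros `α ∈ K` with `‖α‖ ≤ 1`. -/
theorem strassmann
    (K : Type*) [NontriviallyNormedField K] [IsUltrametricDist K] [CompleteSpace K]
    (a : ℕ → K) (ha : Tendsto (fun k => ‖a k‖) atTop (nhds 0))
    (A : ℝ) (hA : ∀ k, ‖a k‖ ≤ A)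
    (N : ℕ) (hN : ‖a N‖ = A) (hNne : a N ≠ 0)
    (hNmax : ∀ k, ‖a k‖ = A → k ≤ N) :
    {α : K | ‖α‖ ≤ 1 ∧ HasSum (fun k => a k * α ^ k) 0}.Finite ∧
      {α : K | ‖α‖ ≤ 1 ∧ HasSum (fun k => a k * α ^ k) 0}.ncard ≤ N := by
  subst hN
  have hIndex : Strassmann.IsStrassmannIndex a N :=
    ⟨hNne, hA, fun k hk => (hA k).lt_of_ne fun h => (hNmax k h).not_gt hk⟩
  exact Set.encard_le_coe_iff_finite_ncard_le.mp
    (Strassmann.encard_unitDiscZeros_le (tendsto_zero_iff_norm_tendsto_zero.mpr ha) hIndex)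
end

section
/- Let K be a field complete with respect to a nontrivial non-archimedean absolute value, and f(T) = Σ_{k≥0} a_k T^k a power series over K with |a_k| → 0 and not all a_k zero. Let A = max_k |a_k| and let m = min{k : |a_k| = A}. Then f has at most m zeros α ∈ K with |α| < 1. -/
/-!
If `α` is a zero of `f = ∑ aₖ Tᵏ` in the open unit disc, then `f = (T - α) g` with
`g = ∑ bₖ Tᵏ`, `bₖ = ∑ⱼ a_{k+1+j} αʲ`, and every other zero of `f` is a zero of `g`.
The Horner recurrence `bₖ = a_{k+1} + α b_{k+1}` together with `‖α b_{k+1}‖ < max ‖aₙ‖` shows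
that `g` has the same maximal coefficient norm, first attained at index `m - 1`; so induction
on `m` applies. For `m = 0` the same estimate applied to `0 = f(α) = a₀ + α b₀` forbids any zero.
-/

open Filter Topology IsUltrametricDist

section Telescoping

variable {K : Type*} [NormedField K]

theorem tsum_mul_pow_eq_add_mul {c : ℕ → K} {x : K} (hc : Summable fun j => c j * x ^ j) :
    ∑' j, c j * x ^ j = c 0 + x * ∑' j, c (j + 1) * x ^ j := by
  rw [hc.tsum_eq_zero_add, ← tsum_mul_left]
  simp only [pow_zero, mul_one, pow_succ]
  congr 2 with j
  ring

/-- The hypotheses say that formally `∑ aₖ Tᵏ = s + (T - x) ∑ bₖ Tᵏ`; this is that identity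
evaluated at `T = y`. -/
theorem eq_add_sub_mul_of_horner {a b : ℕ → K} {x y s t u : K}
    (h0 : s = a 0 + x * b 0) (hsucc : ∀ k, b k = a (k + 1) + x * b (k + 1))
    (ha : HasSum (fun k => a k * y ^ k) t) (hb : HasSum (fun k => b k * y ^ k) u) :
    t = s + (y - x) * u := by
  have hsum : HasSum (fun k => (a k + x * b k) * y ^ k) (t + x * u) := by
    have e : (fun k => (a k + x * b k) * y ^ k) = fun k => a k * y ^ k + x * (b k * y ^ k) :=
      funext fun k => by ring
    rw [e]
    exact ha.add (hb.mul_left x)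
  have hshift : HasSum (fun k => (a (k + 1) + x * b (k + 1)) * y ^ (k + 1)) (y * u) := by
    have e : (fun k => (a (k + 1) + x * b (k + 1)) * y ^ (k + 1)) = fun k => y * (b k * y ^ k) :=
      funext fun k => by rw [← hsucc, pow_succ]; ring
    rw [e]
    exact hb.mul_left y
  have := hsum.unique (hshift.zero_add (f := fun k => (a k + x * b k) * y ^ k))
  rw [pow_zero, mul_one, ← h0] at this
  linear_combination this

end Telescoping

section Ultrametric

variable {K : Type*} [NormedField K] [IsUltrametricDist K]

theorem summable_mul_pow_of_tendsto_norm [CompleteSpace K] {a : ℕ → K} {x : K}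
    (ha : Tendsto (fun k => ‖a k‖) atTop (𝓝 0)) (hx : ‖x‖ ≤ 1) :
    Summable fun k => a k * x ^ k := by
  refine NonarchimedeanAddGroup.summable_of_tendsto_cofinite_zero ?_
  rw [Nat.cofinite_eq_atTop, tendsto_zero_iff_norm_tendsto_zero]
  refine squeeze_zero (fun _ => norm_nonneg _) (fun k => ?_) ha
  rw [norm_mul, norm_pow]
  exact mul_le_of_le_one_right (norm_nonneg _) (pow_le_one₀ (norm_nonneg _) hx)

/-- The coefficients of `(∑ aₖ Tᵏ - ∑ aₖ αᵏ) / (T - α)`. -/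
noncomputable def quotientCoeff (a : ℕ → K) (α : K) (k : ℕ) : K :=
  ∑' j, a (j + (k + 1)) * α ^ j

variable {a : ℕ → K} {α : K} {m : ℕ}

theorem norm_quotientCoeff_le {k : ℕ} {C : ℝ} (hα : ‖α‖ ≤ 1) (hC : 0 ≤ C)
    (h : ∀ n, k < n → ‖a n‖ ≤ C) : ‖quotientCoeff a α k‖ ≤ C := by
  refine norm_tsum_le_of_forall_le_of_nonneg hC fun j => ?_
  rw [norm_mul, norm_pow]
  exact (mul_le_of_le_one_right (norm_nonneg _) (pow_le_one₀ (norm_nonneg _) hα)).trans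
    (h _ (by omega))

theorem tendsto_norm_quotientCoeff (ha : Tendsto (fun k => ‖a k‖) atTop (𝓝 0)) (hα : ‖α‖ ≤ 1) :
    Tendsto (fun k => ‖quotientCoeff a α k‖) atTop (𝓝 0) := by
  refine tendsto_order.2 ⟨fun ε hε => .of_forall fun k => hε.trans_le (norm_nonneg _),
    fun ε hε => ?_⟩
  obtain ⟨N, hN⟩ := eventually_atTop.1 (ha.eventually (ge_mem_nhds (half_pos hε)))
  filter_upwards [eventually_ge_atTop N] with k hk
  exact (norm_quotientCoeff_le hα (half_pos hε).le fun n hn => hN n (by omega)).trans_lt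
    (half_lt_self hε)

structure IsFirstMaxNormIndex (a : ℕ → K) (m : ℕ) : Prop where
  ne_zero : a m ≠ 0
  norm_le : ∀ k, ‖a k‖ ≤ ‖a m‖
  norm_lt : ∀ k < m, ‖a k‖ < ‖a m‖

theorem IsFirstMaxNormIndex.norm_mul_quotientCoeff_lt (h : IsFirstMaxNormIndex a m)
    (hα : ‖α‖ < 1) (k : ℕ) : ‖α * quotientCoeff a α k‖ < ‖a m‖ := by
  have hpos : 0 < ‖a m‖ := norm_pos_iff.2 h.ne_zero
  rw [norm_mul]
  calc ‖α‖ * ‖quotientCoeff a α k‖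
      ≤ ‖α‖ * ‖a m‖ := by
        gcongr
        exact norm_quotientCoeff_le hα.le hpos.le fun n _ => h.norm_le n
    _ < ‖a m‖ := mul_lt_of_lt_one_left hpos hα

variable [CompleteSpace K]

theorem tsum_mul_pow_eq_add_mul_quotientCoeff (ha : Tendsto (fun k => ‖a k‖) atTop (𝓝 0))
    (hα : ‖α‖ ≤ 1) : ∑' k, a k * α ^ k = a 0 + α * quotientCoeff a α 0 :=
  tsum_mul_pow_eq_add_mul (summable_mul_pow_of_tendsto_norm ha hα)

theorem quotientCoeff_eq_add_mul (ha : Tendsto (fun k => ‖a k‖) atTop (𝓝 0)) (hα : ‖α‖ ≤ 1)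
    (k : ℕ) : quotientCoeff a α k = a (k + 1) + α * quotientCoeff a α (k + 1) := by
  have hshift := ha.comp (tendsto_add_atTop_nat (k + 1))
  rw [quotientCoeff, tsum_mul_pow_eq_add_mul (summable_mul_pow_of_tendsto_norm hshift hα)]
  dsimp only
  rw [zero_add, quotientCoeff]
  congr 3 with j
  rw [add_right_comm, add_assoc]

def unitBallZeros (a : ℕ → K) : Set K :=
  {α | ‖α‖ < 1 ∧ HasSum (fun k => a k * α ^ k) 0}

theorem unitBallZeros_subset_insert (ha : Tendsto (fun k => ‖a k‖) atTop (𝓝 0))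
    (hα : α ∈ unitBallZeros a) :
    unitBallZeros a ⊆ insert α (unitBallZeros (quotientCoeff a α)) := by
  rintro β ⟨hβ, hfβ⟩
  refine or_iff_not_imp_left.2 fun hne => ⟨hβ, ?_⟩
  have hg := (summable_mul_pow_of_tendsto_norm
    (tendsto_norm_quotientCoeff ha hα.1.le) hβ.le).hasSum
  have hfα : 0 = a 0 + α * quotientCoeff a α 0 :=
    hα.2.tsum_eq ▸ tsum_mul_pow_eq_add_mul_quotientCoeff ha hα.1.le
  have hfactor := eq_add_sub_mul_of_horner hfα (quotientCoeff_eq_add_mul ha hα.1.le) hfβ hg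
  rw [zero_add, eq_comm, mul_eq_zero, sub_eq_zero] at hfactor
  rwa [hfactor.resolve_left hne] at hg

theorem IsFirstMaxNormIndex.unitBallZeros_eq_empty (h : IsFirstMaxNormIndex a 0)
    (ha : Tendsto (fun k => ‖a k‖) atTop (𝓝 0)) : unitBallZeros a = ∅ := by
  refine Set.eq_empty_of_forall_notMem fun α hα => ?_
  have hfα : 0 = a 0 + α * quotientCoeff a α 0 :=
    hα.2.tsum_eq ▸ tsum_mul_pow_eq_add_mul_quotientCoeff ha hα.1.le
  have := h.norm_mul_quotientCoeff_lt hα.1 0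
  rw [← norm_neg, ← eq_neg_of_add_eq_zero_left hfα.symm] at this
  exact this.false

theorem isFirstMaxNormIndex_quotientCoeff {n : ℕ} (h : IsFirstMaxNormIndex a (n + 1))
    (ha : Tendsto (fun k => ‖a k‖) atTop (𝓝 0)) (hα : ‖α‖ < 1) :
    IsFirstMaxNormIndex (quotientCoeff a α) n := by
  have hsmall := h.norm_mul_quotientCoeff_lt hα
  have hrec := quotientCoeff_eq_add_mul ha hα.le
  have hn : ‖quotientCoeff a α n‖ = ‖a (n + 1)‖ := by
    rw [hrec, norm_add_eq_max_of_norm_ne_norm (hsmall _).ne', max_eq_left (hsmall _).le]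
  refine ⟨norm_ne_zero_iff.1 (hn ▸ norm_ne_zero_iff.2 h.ne_zero), fun k => ?_, fun k hk => ?_⟩
  · exact hn ▸ norm_quotientCoeff_le hα.le (norm_nonneg _) fun n _ => h.norm_le n
  · rw [hn, hrec]
    exact (norm_add_le_max _ _).trans_lt (max_lt (h.norm_lt _ (by omega)) (hsmall _))

theorem encard_unitBallZeros_le (ha : Tendsto (fun k => ‖a k‖) atTop (𝓝 0))
    (h : IsFirstMaxNormIndex a m) : (unitBallZeros a).encard ≤ m := by
  induction m generalizing a with
  | zero => simp [h.unitBallZeros_eq_empty ha]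
  | succ n ih =>
    obtain hempty | ⟨α, hα⟩ := (unitBallZeros a).eq_empty_or_nonempty
    · simp [hempty]
    calc (unitBallZeros a).encard
        ≤ (insert α (unitBallZeros (quotientCoeff a α))).encard :=
          Set.encard_le_encard (unitBallZeros_subset_insert ha hα)
      _ ≤ (unitBallZeros (quotientCoeff a α)).encard + 1 := Set.encard_insert_le _ _
      _ ≤ n + 1 := by
          gcongr
          exact ih (tendsto_norm_quotientCoeff ha hα.1.le)
            (isFirstMaxNormIndex_quotientCoeff h ha hα.1)
      _ = ↑(n + 1) := by push_cast; rfl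

end Ultrametric

/-- **Complement to Strassmann's theorem.**
Let `K` be a field complete with respect to a nontrivial non-archimedean absolute value,
and let `f(T) = Σ_{k≥0} a k * T^k` be a power series over `K` with `‖a k‖ → 0` and not all
`a k` zero.  Let `A = max_k ‖a k‖` and `m = min {k | ‖a k‖ = A}`.  Then `f` has at most `m`
zeros `α ∈ K` with `‖α‖ < 1`. -/
theorem strassmann_complement
    (K : Type*) [NontriviallyNormedField K] [IsUltrametricDist K] [CompleteSpace K]
    (a : ℕ → K) (ha : Tendsto (fun k => ‖a k‖) atTop (nhds 0))
    (A : ℝ) (hA : ∀ k, ‖a k‖ ≤ A)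
    (m : ℕ) (hm : ‖a m‖ = A) (hmne : a m ≠ 0)
    (hmmin : ∀ k, ‖a k‖ = A → m ≤ k) :
    {α : K | ‖α‖ < 1 ∧ HasSum (fun k => a k * α ^ k) 0}.Finite ∧
      {α : K | ‖α‖ < 1 ∧ HasSum (fun k => a k * α ^ k) 0}.ncard ≤ m := by
  subst hm
  have hfirst : IsFirstMaxNormIndex a m :=
    ⟨hmne, hA, fun k hk => (hA k).lt_of_ne fun heq => (hmmin k heq).not_gt hk⟩
  exact Set.encard_le_coe_iff_finite_ncard_le.1 (encard_unitBallZeros_le ha hfirst)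
end

section
/- Let K be a field of characteristic 0, complete with respect to a non-archimedean absolute value |·|, with valuation ring 𝒪 = {α ∈ K : |α| ≤ 1}. Let f(T) ∈ 𝒪[T] be a monic polynomial and α ∈ an algebraic closure of K a root of f such that the extension K(α)/K is ramified. Then |f'(α)| < 1, where the absolute value is extended to the algebraic closure. -/
/-!
If `‖f'(α)‖ = 1`, Newton's method shows that `α` is the only root of `f` at distance `< 1` from
`α`, and hence that every integral `β` with `‖β - α‖ < 1` generates `α`: Newton's iteration for
`f` started at `β` converges inside the complete field `K⟮β⟯`, to a root close to `α`.

Now let `p` have coefficients in `𝒪`, one of them a unit, and `‖p(α)‖ < 1`; we show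
`[K(α) : K] ≤ deg p` by induction on the degree. A non-unit leading coefficient can be dropped,
so let `p` be monic. Divide: `f = p q + r`. If some coefficient of `r` is a unit, `r` is a smaller
such polynomial. Otherwise differentiating at `α` gives `‖p'(α)‖ = 1`, so `p` has a root `β`
with `‖β - α‖ < 1`, and `α ∈ K⟮β⟯` gives `[K(α) : K] ≤ deg β ≤ deg p`.

Finally write an element `y` of `K[α]` as `g(α)` with `deg g < [K(α) : K]`, and let `c` be a
coefficient of `g` of largest norm. Then `‖y‖ ≤ ‖c‖`, and strict inequality would make `g / c`
a polynomial as above of too small degree; so `‖y‖ = ‖c‖` lies in `‖K‖`, i.e. `K(α)/K` is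
unramified.
-/

open Polynomial IntermediateField
open scoped NormedField

namespace Polynomial

section SupNorm

variable {R : Type*} [SeminormedRing R]

theorem supNorm_le_iff {p : R[X]} {C : ℝ} : p.supNorm ≤ C ↔ ∀ i, ‖p.coeff i‖ ≤ C := by
  rw [isLUB_le_iff p.isGreatest_supNorm.isLUB, mem_upperBounds, Set.forall_mem_range]

theorem supNorm_divX_le (p : R[X]) : p.divX.supNorm ≤ p.supNorm :=
  supNorm_le_iff.2 fun i => by rw [coeff_divX]; exact p.le_supNorm _

theorem supNorm_eraseLead_of_norm_leadingCoeff_lt {p : R[X]} (hp : ‖p.leadingCoeff‖ < p.supNorm) :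
    p.eraseLead.supNorm = p.supNorm := by
  refine le_antisymm (supNorm_le_iff.2 fun i => ?_) ?_
  · rw [eraseLead_coeff]
    split_ifs
    · rw [norm_zero]; exact p.supNorm_nonneg
    · exact p.le_supNorm i
  · obtain ⟨i, hi⟩ := p.exists_eq_supNorm
    have hin : i ≠ p.natDegree := by rintro rfl; exact hp.ne' hi
    rw [hi, ← eraseLead_coeff_of_ne _ hin]
    exact p.eraseLead.le_supNorm i

end SupNorm

theorem supNorm_C_mul {R : Type*} [NormedDivisionRing R] (a : R) (p : R[X]) :
    (C a * p).supNorm = ‖a‖ * p.supNorm := by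
  refine le_antisymm (supNorm_le_iff.2 fun i => ?_) ?_
  · rw [coeff_C_mul, norm_mul]
    exact mul_le_mul_of_nonneg_left (p.le_supNorm i) (norm_nonneg a)
  · obtain ⟨i, hi⟩ := p.exists_eq_supNorm
    rw [hi, ← norm_mul, ← coeff_C_mul]
    exact (C a * p).le_supNorm i

theorem eval_add_eq_eval_add_mul_eval_divX_taylor {R : Type*} [CommRing R] (p : R[X]) (x d : R) :
    p.eval (x + d) = p.eval x + d * (taylor x p).divX.eval d := by
  conv_lhs => rw [add_comm, ← taylor_eval, ← divX_mul_X_add (taylor x p)]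
  simp only [eval_add, eval_mul, eval_X, eval_C, taylor_coeff_zero]
  ring

theorem newtonMap_eq {F : Type*} [Field F] (p : F[X]) (x : F) :
    p.newtonMap x = x - p.eval x / p.derivative.eval x := by
  simp [newtonMap_apply, div_eq_inv_mul]

theorem norm_newtonMap_sub {E : Type*} [NormedField E] {p : E[X]} {x : E}
    (hp'x : ‖p.derivative.eval x‖ = 1) : ‖p.newtonMap x - x‖ = ‖p.eval x‖ := by
  rw [newtonMap_eq, sub_sub_cancel_left, norm_neg, norm_div, hp'x, div_one]

section Ultrametric

variable {E : Type*} [NormedField E] [IsUltrametricDist E]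

theorem norm_eval_le_supNorm (p : E[X]) {x : E} (hx : ‖x‖ ≤ 1) : ‖p.eval x‖ ≤ p.supNorm := by
  rw [eval_eq_sum_range]
  refine IsUltrametricDist.norm_sum_le_of_forall_le_of_nonneg p.supNorm_nonneg fun i _ => ?_
  rw [norm_mul, norm_pow]
  exact (mul_le_of_le_one_right (norm_nonneg _) (pow_le_one₀ (norm_nonneg _) hx)).trans
    (p.le_supNorm i)

theorem supNorm_derivative_le (p : E[X]) : p.derivative.supNorm ≤ p.supNorm :=
  supNorm_le_iff.2 fun i => by
    rw [coeff_derivative, norm_mul, ← Nat.cast_succ]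
    exact (mul_le_of_le_one_right (norm_nonneg _)
      (IsUltrametricDist.norm_natCast_le_one E _)).trans (p.le_supNorm _)

theorem supNorm_taylor_le (p : E[X]) {x : E} (hx : ‖x‖ ≤ 1) :
    (taylor x p).supNorm ≤ p.supNorm :=
  supNorm_le_iff.2 fun k => by
    rw [taylor_coeff]
    refine (norm_eval_le_supNorm _ hx).trans (supNorm_le_iff.2 fun n => ?_)
    rw [hasseDeriv_coeff, norm_mul]
    exact (mul_le_of_le_one_left (norm_nonneg _)
      (IsUltrametricDist.norm_natCast_le_one E _)).trans (p.le_supNorm _)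

theorem norm_eval_add_sub_eval_le (p : E[X]) {x d : E} (hx : ‖x‖ ≤ 1) (hd : ‖d‖ ≤ 1) :
    ‖p.eval (x + d) - p.eval x‖ ≤ p.supNorm * ‖d‖ := by
  rw [eval_add_eq_eval_add_mul_eval_divX_taylor, add_sub_cancel_left, norm_mul, mul_comm]
  gcongr
  exact (norm_eval_le_supNorm _ hd).trans ((supNorm_divX_le _).trans (supNorm_taylor_le p hx))

theorem norm_eval_add_sub_eval_sub_le (p : E[X]) {x d : E} (hx : ‖x‖ ≤ 1) (hd : ‖d‖ ≤ 1) :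
    ‖p.eval (x + d) - p.eval x - p.derivative.eval x * d‖ ≤ p.supNorm * ‖d‖ ^ 2 := by
  have hT := divX_mul_X_add (taylor x p).divX
  rw [coeff_divX, zero_add, taylor_coeff_one] at hT
  rw [eval_add_eq_eval_add_mul_eval_divX_taylor, ← hT]
  simp only [eval_add, eval_mul, eval_X, eval_C]
  rw [show p.eval x + d * ((taylor x p).divX.divX.eval d * d + p.derivative.eval x) - p.eval x
    - p.derivative.eval x * d = (taylor x p).divX.divX.eval d * d ^ 2 by ring, norm_mul, norm_pow]
  gcongr
  exact (norm_eval_le_supNorm _ hd).trans ((supNorm_divX_le _).trans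
    ((supNorm_divX_le _).trans (supNorm_taylor_le p hx)))

theorem norm_eval_sub_eval_lt_one {p : E[X]} (hp : p.supNorm ≤ 1) {x y : E} (hx : ‖x‖ ≤ 1)
    (hyx : ‖y - x‖ < 1) : ‖p.eval y - p.eval x‖ < 1 := by
  have h := p.norm_eval_add_sub_eval_le hx hyx.le
  rw [add_sub_cancel] at h
  exact h.trans_lt (mul_lt_one_of_nonneg_of_lt_one_right hp (norm_nonneg _) hyx)

theorem norm_eval_lt_one_of_norm_sub_lt_one {p : E[X]} (hp : p.supNorm ≤ 1) {x y : E}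
    (hx : ‖x‖ ≤ 1) (hpx : ‖p.eval x‖ < 1) (hyx : ‖y - x‖ < 1) : ‖p.eval y‖ < 1 := by
  rw [← sub_add_cancel (p.eval y) (p.eval x)]
  exact (IsUltrametricDist.norm_add_le_max _ _).trans_lt
    (max_lt (norm_eval_sub_eval_lt_one hp hx hyx) hpx)

theorem norm_eval_eq_one_of_norm_sub_lt_one {p : E[X]} (hp : p.supNorm ≤ 1) {x y : E}
    (hx : ‖x‖ ≤ 1) (hpx : ‖p.eval x‖ = 1) (hyx : ‖y - x‖ < 1) : ‖p.eval y‖ = 1 := by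
  have hlt : ‖p.eval y - p.eval x‖ < ‖p.eval x‖ := hpx ▸ norm_eval_sub_eval_lt_one hp hx hyx
  rw [← hpx, ← sub_add_cancel (p.eval y) (p.eval x),
    IsUltrametricDist.norm_add_eq_max_of_norm_ne_norm hlt.ne, max_eq_right hlt.le]

theorem norm_le_one_of_eval_eq_zero {p : E[X]} (hp : p.Monic) (hp1 : p.supNorm ≤ 1) {x : E}
    (hx : p.eval x = 0) : ‖x‖ ≤ 1 := by
  by_contra! h
  set n := p.natDegree
  have hn : n ≠ 0 := fun h0 => by simp [hp.natDegree_eq_zero.1 h0] at hx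
  have hsum : x ^ n = -∑ i ∈ Finset.range n, p.coeff i * x ^ i := by
    rw [hp.as_sum] at hx
    simpa [eval_finsetSum, eq_neg_iff_add_eq_zero] using hx
  have : ‖x‖ ^ n ≤ ‖x‖ ^ (n - 1) := by
    rw [← norm_pow, hsum, norm_neg]
    refine IsUltrametricDist.norm_sum_le_of_forall_le_of_nonneg (by positivity) fun i hi => ?_
    rw [norm_mul, norm_pow]
    exact (mul_le_mul ((p.le_supNorm i).trans hp1)
      (pow_le_pow_right₀ h.le (Nat.le_sub_one_of_lt (Finset.mem_range.1 hi))) (by positivity)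
      zero_le_one).trans_eq (one_mul _)
  exact (pow_lt_pow_right₀ h (by omega)).not_ge this

theorem eq_of_eval_eq_zero_of_norm_sub_lt_one {p : E[X]} (hp : p.supNorm ≤ 1) {x y : E}
    (hx : ‖x‖ ≤ 1) (hpx : p.eval x = 0) (hp'x : ‖p.derivative.eval x‖ = 1) (hpy : p.eval y = 0)
    (hyx : ‖y - x‖ < 1) : y = x := by
  have h := p.norm_eval_add_sub_eval_sub_le hx hyx.le
  rw [add_sub_cancel, hpx, hpy, sub_self, zero_sub, norm_neg, norm_mul, hp'x, one_mul] at h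
  have : ‖y - x‖ ≤ 0 := by
    nlinarith [norm_nonneg (y - x), mul_le_of_le_one_left (sq_nonneg ‖y - x‖) hp]
  exact sub_eq_zero.1 (norm_le_zero_iff.1 this)

theorem norm_eval_newtonMap_le {p : E[X]} (hp : p.supNorm ≤ 1) {x : E} (hx : ‖x‖ ≤ 1)
    (hp'x : ‖p.derivative.eval x‖ = 1) (hpx : ‖p.eval x‖ ≤ 1) :
    ‖p.eval (p.newtonMap x)‖ ≤ ‖p.eval x‖ ^ 2 := by
  have hd := norm_newtonMap_sub hp'x
  have h := p.norm_eval_add_sub_eval_sub_le hx (hd.trans_le hpx)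
  have hp'x0 : p.derivative.eval x ≠ 0 := norm_ne_zero_iff.1 (by rw [hp'x]; exact one_ne_zero)
  have hstep : p.derivative.eval x * (p.newtonMap x - x) = -p.eval x := by
    rw [newtonMap_eq, sub_sub_cancel_left, mul_neg, mul_div_cancel₀ _ hp'x0]
  rw [add_sub_cancel, hd, hstep, sub_neg_eq_add, sub_add_cancel] at h
  exact h.trans (mul_le_of_le_one_left (sq_nonneg _) hp)

theorem newtonMap_iterate_spec {p : E[X]} (hp : p.supNorm ≤ 1) {a : E} (ha : ‖a‖ ≤ 1)
    (hpa : ‖p.eval a‖ < 1) (hp'a : ‖p.derivative.eval a‖ = 1) (n : ℕ) :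
    ‖p.newtonMap^[n] a - a‖ ≤ ‖p.eval a‖ ∧ ‖p.derivative.eval (p.newtonMap^[n] a)‖ = 1 ∧
      ‖p.eval (p.newtonMap^[n] a)‖ ≤ ‖p.eval a‖ ^ (n + 1) := by
  set t := ‖p.eval a‖
  induction n with
  | zero => simpa [t] using hp'a
  | succ n ih =>
    obtain ⟨hdist, hder, hval⟩ := ih
    set x := p.newtonMap^[n] a
    have hxa : ‖x - a‖ < 1 := hdist.trans_lt hpa
    have hx : ‖x‖ ≤ 1 := by
      rw [← sub_add_cancel x a]
      exact (IsUltrametricDist.norm_add_le_max _ _).trans (max_le hxa.le ha)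
    have hpx : ‖p.eval x‖ ≤ t :=
      hval.trans (pow_le_of_le_one (norm_nonneg _) hpa.le n.succ_ne_zero)
    have hnx : ‖p.newtonMap x - x‖ < 1 := (norm_newtonMap_sub hder).trans_le hpx |>.trans_lt hpa
    rw [Function.iterate_succ_apply']
    refine ⟨?_, norm_eval_eq_one_of_norm_sub_lt_one ((supNorm_derivative_le p).trans hp) hx hder
      hnx, ?_⟩
    · rw [← sub_add_sub_cancel _ x a]
      refine (IsUltrametricDist.norm_add_le_max _ _).trans (max_le ?_ hdist)
      rw [norm_newtonMap_sub hder]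
      exact hpx
    · calc ‖p.eval (p.newtonMap x)‖ ≤ ‖p.eval x‖ ^ 2 :=
            norm_eval_newtonMap_le hp hx hder (hpx.trans hpa.le)
        _ ≤ (t ^ (n + 1)) ^ 2 := by gcongr
        _ ≤ t ^ (n + 1 + 1) := by
            rw [← pow_mul]
            exact pow_le_pow_of_le_one (norm_nonneg _) hpa.le (by omega)

/-- Hensel's lemma; `b` is the limit of Newton's iteration started at `a`. -/
theorem exists_isRoot_norm_sub_le [CompleteSpace E] {p : E[X]} (hp : p.supNorm ≤ 1) {a : E}
    (ha : ‖a‖ ≤ 1) (hpa : ‖p.eval a‖ < 1) (hp'a : ‖p.derivative.eval a‖ = 1) :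
    ∃ b, p.IsRoot b ∧ ‖b - a‖ ≤ ‖p.eval a‖ := by
  have spec := newtonMap_iterate_spec hp ha hpa hp'a
  have hcauchy : CauchySeq fun n => p.newtonMap^[n] a := by
    refine cauchySeq_of_le_geometric ‖p.eval a‖ ‖p.eval a‖ hpa fun n => ?_
    rw [dist_comm, dist_eq_norm, Function.iterate_succ_apply', norm_newtonMap_sub (spec n).2.1,
      ← pow_succ']
    exact (spec n).2.2
  obtain ⟨b, hb⟩ := cauchySeq_tendsto_of_complete hcauchy
  refine ⟨b, ?_, le_of_tendsto ((hb.sub_const a).norm) (.of_forall fun n => (spec n).1)⟩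
  refine tendsto_nhds_unique ((p.continuous.tendsto b).comp hb)
    (squeeze_zero_norm (fun n => (spec n).2.2) ?_)
  exact (tendsto_pow_atTop_nhds_zero_of_lt_one (norm_nonneg _) hpa).comp
    (Filter.tendsto_add_atTop_nat 1)

end Ultrametric

theorem modByMonic_mem_lifts {R S : Type*} [CommRing R] [CommRing S] (f : R →+* S) {p q : S[X]}
    (hp : p ∈ lifts f) (hq : q ∈ lifts f) (hqm : q.Monic) : p %ₘ q ∈ lifts f := by
  obtain ⟨q', rfl, -, hq'm⟩ := lifts_and_natDegree_eq_and_monic hq hqm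
  obtain ⟨p', rfl⟩ := (mem_lifts _).1 hp
  exact (mem_lifts _).2 ⟨p' %ₘ q', map_modByMonic f hq'm⟩

theorem divByMonic_mem_lifts {R S : Type*} [CommRing R] [CommRing S] (f : R →+* S) {p q : S[X]}
    (hp : p ∈ lifts f) (hq : q ∈ lifts f) (hqm : q.Monic) : p /ₘ q ∈ lifts f := by
  obtain ⟨q', rfl, -, hq'm⟩ := lifts_and_natDegree_eq_and_monic hq hqm
  obtain ⟨p', rfl⟩ := (mem_lifts _).1 hp
  exact (mem_lifts _).2 ⟨p' /ₘ q', map_divByMonic f hq'm⟩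

section Integer

variable {K : Type*} [NontriviallyNormedField K] [IsUltrametricDist K]

theorem mem_lifts_integer_iff {p : K[X]} :
    p ∈ lifts (Valued.integer K).subtype ↔ p.supNorm ≤ 1 := by
  simp [lifts_iff_coeff_lifts, supNorm_le_iff, Valued.integer.mem_iff]

theorem supNorm_modByMonic_le_one {p q : K[X]} (hp : p.supNorm ≤ 1) (hq : q.supNorm ≤ 1)
    (hqm : q.Monic) : (p %ₘ q).supNorm ≤ 1 :=
  mem_lifts_integer_iff.1 <|
    modByMonic_mem_lifts _ (mem_lifts_integer_iff.2 hp) (mem_lifts_integer_iff.2 hq) hqm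

theorem supNorm_divByMonic_le_one {p q : K[X]} (hp : p.supNorm ≤ 1) (hq : q.supNorm ≤ 1)
    (hqm : q.Monic) : (p /ₘ q).supNorm ≤ 1 :=
  mem_lifts_integer_iff.1 <|
    divByMonic_mem_lifts _ (mem_lifts_integer_iff.2 hp) (mem_lifts_integer_iff.2 hq) hqm

end Integer

section Algebra

variable {K L : Type*} [NormedField K] [NormedField L] [NormedAlgebra K L]

theorem supNorm_map_algebraMap (p : K[X]) : (p.map (algebraMap K L)).supNorm = p.supNorm :=
  le_antisymm (supNorm_le_iff.2 fun i => by rw [coeff_map, norm_algebraMap']; exact p.le_supNorm i)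
    (supNorm_le_iff.2 fun i => by
      rw [← norm_algebraMap' (𝕜' := L) (p.coeff i), ← coeff_map]
      exact (p.map (algebraMap K L)).le_supNorm i)

variable [IsUltrametricDist L]

theorem norm_aeval_le_supNorm (p : K[X]) {x : L} (hx : ‖x‖ ≤ 1) : ‖aeval x p‖ ≤ p.supNorm := by
  rw [← eval_map_algebraMap, ← supNorm_map_algebraMap (L := L)]
  exact norm_eval_le_supNorm _ hx

theorem norm_le_one_of_aeval_eq_zero {p : K[X]} (hp : p.Monic) (hp1 : p.supNorm ≤ 1) {x : L}
    (hx : aeval x p = 0) : ‖x‖ ≤ 1 :=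
  norm_le_one_of_eval_eq_zero (hp.map _) ((supNorm_map_algebraMap p).trans_le hp1)
    ((eval_map_algebraMap p x).trans hx)

theorem norm_aeval_eraseLead_lt_one {p : K[X]} {x : L} (hx : ‖x‖ ≤ 1) (hpx : ‖aeval x p‖ < 1)
    (hp : ‖p.leadingCoeff‖ < 1) : ‖aeval x p.eraseLead‖ < 1 := by
  rw [eq_sub_of_add_eq (eraseLead_add_C_mul_X_pow p), sub_eq_add_neg, map_add, map_neg]
  refine (IsUltrametricDist.norm_add_le_max _ _).trans_lt (max_lt hpx ?_)
  rw [norm_neg, map_mul, aeval_C, map_pow, aeval_X, norm_mul, norm_algebraMap', norm_pow]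
  exact (mul_le_of_le_one_right (norm_nonneg _) (pow_le_one₀ (norm_nonneg _) hx)).trans_lt hp

end Algebra

end Polynomial

theorem norm_aeval_derivative_eq_one_of_supNorm_modByMonic_lt_one {K L : Type*}
    [NontriviallyNormedField K] [IsUltrametricDist K] [NormedField L] [NormedAlgebra K L]
    [IsUltrametricDist L] {f : K[X]} {α : L} (hf : f.supNorm ≤ 1)
    (hα : ‖α‖ ≤ 1) (hf'α : ‖aeval α f.derivative‖ = 1) {q : K[X]} (hq : q.Monic)
    (hq1 : q.supNorm ≤ 1) (hqα : ‖aeval α q‖ < 1) (hr : (f %ₘ q).supNorm < 1) :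
    ‖aeval α q.derivative‖ = 1 := by
  have hQ := norm_aeval_le_supNorm _ hα |>.trans (supNorm_divByMonic_le_one hf hq1 hq)
  have hQ' := norm_aeval_le_supNorm _ hα |>.trans
    ((supNorm_derivative_le _).trans (supNorm_divByMonic_le_one hf hq1 hq))
  have hr' : ‖aeval α (f %ₘ q).derivative‖ < 1 :=
    (norm_aeval_le_supNorm _ hα).trans_lt ((supNorm_derivative_le _).trans_lt hr)
  have hsplit : aeval α f.derivative = aeval α (f %ₘ q).derivative +
      aeval α q * aeval α (f /ₘ q).derivative + aeval α q.derivative * aeval α (f /ₘ q) := by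
    conv_lhs => rw [← modByMonic_add_div f q]
    simp only [derivative_mul, map_add, map_mul]
    ring
  refine le_antisymm ((norm_aeval_le_supNorm _ hα).trans ((supNorm_derivative_le q).trans hq1))
    (not_lt.1 fun hlt => hf'α.not_lt ?_)
  rw [hsplit]
  refine (IsUltrametricDist.norm_add_le_max _ _).trans_lt (max_lt
    ((IsUltrametricDist.norm_add_le_max _ _).trans_lt (max_lt hr' ?_)) ?_) <;> rw [norm_mul]
  · exact mul_lt_one_of_nonneg_of_lt_one_left (norm_nonneg _) hqα hQ'
  · exact mul_lt_one_of_nonneg_of_lt_one_left (norm_nonneg _) hlt hQ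

section Adjoin

variable {K L : Type*} [NontriviallyNormedField K] [CompleteSpace K] [NormedField L]
  [NormedAlgebra K L] [IsUltrametricDist L]

theorem exists_mem_adjoin_aeval_eq_zero {p : K[X]} (hp : p.supNorm ≤ 1) {x : L}
    (hx : IsIntegral K x) (hx1 : ‖x‖ ≤ 1) (hpx : ‖aeval x p‖ < 1)
    (hp'x : ‖aeval x p.derivative‖ = 1) :
    ∃ y ∈ K⟮x⟯, aeval y p = 0 ∧ ‖y - x‖ ≤ ‖aeval x p‖ := by
  have := adjoin.finiteDimensional hx
  have := FiniteDimensional.complete K K⟮x⟯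
  have heval (q : K[X]) : ((aeval (AdjoinSimple.gen K x) q : K⟮x⟯) : L) = aeval x q := by
    rw [← aeval_coe, AdjoinSimple.coe_gen]
  obtain ⟨y, hy, hyx⟩ := exists_isRoot_norm_sub_le (p := p.map (algebraMap K K⟮x⟯))
    (a := AdjoinSimple.gen K x) ((supNorm_map_algebraMap p).trans_le hp) hx1
    (by rwa [eval_map_algebraMap, AddSubgroupClass.coe_norm, heval])
    (by rwa [derivative_map, eval_map_algebraMap, AddSubgroupClass.coe_norm, heval])
  rw [IsRoot, eval_map_algebraMap] at hy
  rw [eval_map_algebraMap, AddSubgroupClass.coe_norm, AddSubgroupClass.coe_norm, heval,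
    AddSubgroupClass.coe_sub, AdjoinSimple.coe_gen] at hyx
  refine ⟨y, y.2, ?_, hyx⟩
  rw [aeval_coe, hy, ZeroMemClass.coe_zero]

theorem mem_adjoin_simple_of_norm_sub_lt_one {f : K[X]} (hf : f.supNorm ≤ 1) {α β : L}
    (hα : ‖α‖ ≤ 1) (hfα : aeval α f = 0) (hf'α : ‖aeval α f.derivative‖ = 1)
    (hβ : IsIntegral K β) (hβα : ‖β - α‖ < 1) : α ∈ K⟮β⟯ := by
  set F := f.map (algebraMap K L)
  have hF : F.supNorm ≤ 1 := (supNorm_map_algebraMap f).trans_le hf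
  have hF' (x : L) : F.derivative.eval x = aeval x f.derivative := by
    rw [derivative_map, eval_map_algebraMap]
  rw [← eval_map_algebraMap] at hfα
  rw [← hF'] at hf'α
  have hβ1 : ‖β‖ ≤ 1 := by
    rw [← sub_add_cancel β α]
    exact (IsUltrametricDist.norm_add_le_max _ _).trans (max_le hβα.le hα)
  have hfβ : ‖aeval β f‖ < 1 := by
    rw [← eval_map_algebraMap]
    exact norm_eval_lt_one_of_norm_sub_lt_one hF hα (by rw [hfα, norm_zero]; exact one_pos) hβα
  have hf'β : ‖aeval β f.derivative‖ = 1 := by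
    rw [← hF']
    exact norm_eval_eq_one_of_norm_sub_lt_one ((supNorm_derivative_le F).trans hF) hα hf'α hβα
  obtain ⟨γ, hγ, hfγ, hγβ⟩ := exists_mem_adjoin_aeval_eq_zero hf hβ hβ1 hfβ hf'β
  have hγα : ‖γ - α‖ < 1 := by
    rw [← sub_add_sub_cancel γ β α]
    exact (IsUltrametricDist.norm_add_le_max _ _).trans_lt (max_lt (hγβ.trans_lt hfβ) hβα)
  rwa [← eq_of_eval_eq_zero_of_norm_sub_lt_one hF hα hfα hf'α
    ((eval_map_algebraMap f γ).trans hfγ) hγα]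

theorem natDegree_minpoly_le_of_norm_aeval_derivative_eq_one {f : K[X]} {α : L} (hfm : f.Monic)
    (hf : f.supNorm ≤ 1) (hfα : aeval α f = 0) (hf'α : ‖aeval α f.derivative‖ = 1) {q : K[X]}
    (hq : q.Monic) (hq1 : q.supNorm ≤ 1) (hqα : ‖aeval α q‖ < 1)
    (hq'α : ‖aeval α q.derivative‖ = 1) : (minpoly K α).natDegree ≤ q.natDegree := by
  have hα := norm_le_one_of_aeval_eq_zero hfm hf hfα
  obtain ⟨β, -, hqβ, hβα⟩ :=
    exists_mem_adjoin_aeval_eq_zero hq1 ⟨f, hfm, hfα⟩ hα hqα hq'α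
  have hβ : IsIntegral K β := ⟨q, hq, hqβ⟩
  have hαβ := mem_adjoin_simple_of_norm_sub_lt_one hf hα hfα hf'α hβ (hβα.trans_lt hqα)
  have := adjoin.finiteDimensional hβ
  calc (minpoly K α).natDegree = (minpoly K (⟨α, hαβ⟩ : K⟮β⟯)).natDegree := by
        rw [IntermediateField.minpoly_eq]
    _ ≤ Module.finrank K K⟮β⟯ := minpoly.natDegree_le _
    _ = (minpoly K β).natDegree := adjoin.finrank hβ
    _ ≤ q.natDegree := natDegree_le_of_dvd (minpoly.dvd K β hqβ) hq.ne_zero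

end Adjoin

section Ramification

variable {K L : Type*} [NontriviallyNormedField K] [CompleteSpace K] [IsUltrametricDist K]
  [NormedField L] [NormedAlgebra K L] [IsUltrametricDist L] {f : K[X]} {α : L}

theorem natDegree_minpoly_le_of_monic (hfm : f.Monic) (hf : f.supNorm ≤ 1)
    (hfα : aeval α f = 0) (hf'α : ‖aeval α f.derivative‖ = 1) {q : K[X]} (hq : q.Monic)
    (hq1 : q.supNorm ≤ 1) (hqα : ‖aeval α q‖ < 1)
    (hmin : ∀ r : K[X], r.natDegree < q.natDegree → r.supNorm = 1 → ‖aeval α r‖ < 1 →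
      (minpoly K α).natDegree ≤ r.natDegree) :
    (minpoly K α).natDegree ≤ q.natDegree := by
  have hα := norm_le_one_of_aeval_eq_zero hfm hf hfα
  rcases (supNorm_modByMonic_le_one hf hq1 hq).lt_or_eq with hr | hr
  · exact natDegree_minpoly_le_of_norm_aeval_derivative_eq_one hfm hf hfα hf'α hq hq1 hqα
      (norm_aeval_derivative_eq_one_of_supNorm_modByMonic_lt_one hf hα hf'α hq hq1 hqα hr)
  have hdeg : (f %ₘ q).natDegree < q.natDegree :=
    natDegree_modByMonic_lt f hq (by rintro rfl; simp at hqα)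
  have hrα : aeval α (f %ₘ q) = -(aeval α q * aeval α (f /ₘ q)) := by
    rw [eq_neg_iff_add_eq_zero, ← map_mul, ← map_add, modByMonic_add_div, hfα]
  refine (hmin _ hdeg hr ?_).trans hdeg.le
  rw [hrα, norm_neg, norm_mul]
  exact mul_lt_one_of_nonneg_of_lt_one_left (norm_nonneg _) hqα
    ((norm_aeval_le_supNorm _ hα).trans (supNorm_divByMonic_le_one hf hq1 hq))

theorem natDegree_minpoly_le_of_norm_aeval_lt_one (hfm : f.Monic) (hf : f.supNorm ≤ 1)
    (hfα : aeval α f = 0) (hf'α : ‖aeval α f.derivative‖ = 1) {p : K[X]} (hp : p.supNorm = 1)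
    (hpα : ‖aeval α p‖ < 1) : (minpoly K α).natDegree ≤ p.natDegree := by
  have hα := norm_le_one_of_aeval_eq_zero hfm hf hfα
  induction hn : p.natDegree using Nat.strong_induction_on generalizing p with
  | _ n ih =>
  rcases (hp ▸ p.le_supNorm p.natDegree : ‖p.leadingCoeff‖ ≤ 1).lt_or_eq with hlead | hlead
  · have hn0 : n ≠ 0 := by
      rintro rfl
      rw [eq_C_of_natDegree_eq_zero hn, supNorm_C] at hp
      rw [leadingCoeff, hn, hp] at hlead
      exact hlead.false
    have hdeg : p.eraseLead.natDegree < n := (eraseLead_natDegree_le p).trans_lt (by omega)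
    exact (ih _ hdeg ((supNorm_eraseLead_of_norm_leadingCoeff_lt (hp ▸ hlead)).trans hp)
      (norm_aeval_eraseLead_lt_one hα hpα hlead) rfl).trans hdeg.le
  · have hc0 : p.leadingCoeff ≠ 0 := norm_ne_zero_iff.1 (hlead ▸ one_ne_zero)
    have hnc : ‖p.leadingCoeff⁻¹‖ = 1 := by rw [norm_inv, hlead, inv_one]
    have hqdeg : (C p.leadingCoeff⁻¹ * p).natDegree = p.natDegree :=
      natDegree_C_mul (inv_ne_zero hc0)
    rw [← hn, ← hqdeg]
    refine natDegree_minpoly_le_of_monic hfm hf hfα hf'α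
      (monic_C_mul_of_mul_leadingCoeff_eq_one (inv_mul_cancel₀ hc0))
      (by rw [supNorm_C_mul, hnc, hp, one_mul])
      (by rwa [map_mul, aeval_C, norm_mul, norm_algebraMap', hnc, one_mul])
      fun r hr hr1 hrα => ih _ (hqdeg.trans hn ▸ hr) hr1 hrα rfl

theorem exists_norm_eq_of_mem_adjoin (hfm : f.Monic) (hf : f.supNorm ≤ 1)
    (hfα : aeval α f = 0) (hf'α : ‖aeval α f.derivative‖ = 1) {y : L}
    (hy : y ∈ Algebra.adjoin K {α}) : ∃ x : K, ‖x‖ = ‖y‖ := by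
  have hα := norm_le_one_of_aeval_eq_zero hfm hf hfα
  rw [Algebra.adjoin_singleton_eq_range_aeval] at hy
  obtain ⟨g, rfl⟩ := hy
  set r := g %ₘ minpoly K α
  have hr : aeval α r = aeval α g := minpoly.aeval_modByMonic_minpoly g α
  obtain ⟨i, hi⟩ := r.exists_eq_supNorm
  refine ⟨r.coeff i, le_antisymm ?_ (hi ▸ hr ▸ norm_aeval_le_supNorm r hα)⟩
  by_contra! hlt
  have hc : 0 < ‖r.coeff i‖ := (norm_nonneg _).trans_lt hlt
  have hr0 : r ≠ 0 := fun h => by simp [h] at hc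
  have hdeg := natDegree_minpoly_le_of_norm_aeval_lt_one hfm hf hfα hf'α
    (p := C (r.coeff i)⁻¹ * r)
    (by rw [supNorm_C_mul, norm_inv, ← hi, inv_mul_cancel₀ (hi ▸ hc.ne')])
    (by rwa [map_mul, aeval_C, norm_mul, norm_algebraMap', norm_inv, hr, inv_mul_lt_one₀ hc])
  rw [natDegree_C_mul (inv_ne_zero (norm_pos_iff.1 hc))] at hdeg
  exact hdeg.not_gt
    (natDegree_lt_natDegree hr0 (degree_modByMonic_lt _ (minpoly.monic ⟨f, hfm, hfα⟩)))

end Ramification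

theorem norm_derivative_lt_one_of_ramified_general
    (K L : Type*) [NontriviallyNormedField K] [CompleteSpace K] [IsUltrametricDist K]
    [NormedField L] [Algebra K L]
    (hext : ∀ x : K, ‖algebraMap K L x‖ = ‖x‖)
    (f : Polynomial K) (hmonic : f.Monic) (hcoeff : ∀ i, ‖f.coeff i‖ ≤ 1)
    (α : L) (hroot : Polynomial.aeval α f = 0)
    (hram : ∃ y ∈ Algebra.adjoin K ({α} : Set L), y ≠ 0 ∧ ∀ x : K, ‖x‖ ≠ ‖y‖) :
    ‖Polynomial.aeval α f.derivative‖ < 1 := by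
  let _ : NormedAlgebra K L := { norm_smul_le c x := by rw [Algebra.smul_def, norm_mul, hext] }
  have := IsUltrametricDist.of_normedAlgebra K (L := L)
  have hf : f.supNorm ≤ 1 := supNorm_le_iff.2 hcoeff
  have hα := norm_le_one_of_aeval_eq_zero hmonic hf hroot
  refine ((norm_aeval_le_supNorm _ hα).trans ((supNorm_derivative_le f).trans hf)).lt_of_ne
    fun hf'α => ?_
  obtain ⟨y, hy, -, hyK⟩ := hram
  obtain ⟨x, hx⟩ := exists_norm_eq_of_mem_adjoin hmonic hf hroot hf'α hy
  exact hyK x hx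

/-- Let `K` be a field of characteristic `0`, complete with respect to a non-archimedean
absolute value, with valuation ring `𝒪 = {x : ‖x‖ ≤ 1}`.  Let `f ∈ 𝒪[T]` be a monic
polynomial and `α` a root of `f` in an extension `L` of `K` carrying the (unique) extension
of the absolute value (e.g. an algebraic closure of `K`), such that `K(α)/K` is ramified,
i.e. the extension of value groups is nontrivial: some nonzero `y ∈ K(α)` has `‖y‖`
different from `‖x‖` for all `x ∈ K`.  Then `‖f'(α)‖ < 1`. -/
theorem norm_derivative_lt_one_of_ramified
    (K L : Type*) [NontriviallyNormedField K] [CompleteSpace K] [IsUltrametricDist K]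
    [CharZero K] [NormedField L] [Algebra K L]
    (hext : ∀ x : K, ‖algebraMap K L x‖ = ‖x‖)
    (f : Polynomial K) (hmonic : f.Monic) (hcoeff : ∀ i, ‖f.coeff i‖ ≤ 1)
    (α : L) (hroot : Polynomial.aeval α f = 0)
    (hram : ∃ y ∈ Algebra.adjoin K ({α} : Set L), y ≠ 0 ∧ ∀ x : K, ‖x‖ ≠ ‖y‖) :
    ‖Polynomial.aeval α f.derivative‖ < 1 :=
  norm_derivative_lt_one_of_ramified_general K L hext f hmonic hcoeff α hroot hram
end

section
/- Let K be a field of characteristic 0, complete with respect to a non-archimedean absolute value, and let f ∈ K[T] be a polynomial of degree n with leading coefficient of absolute value 1, all coefficients of absolute value at most 1, whose roots all lie in K. Suppose the distinct roots α₁, …, α_s of f (with multiplicities e₁, …, e_s) satisfy |α_i − α_j| = 1 for i ≠ j, and |f^{(e_i)}(α_i)/e_i!| = 1 for each i. Let g ∈ K[T] be a polynomial of degree n all of whose coefficients differ from the corresponding coefficients of f by elements of absolute value < 1. Then every root β of g in an algebraic closure of K satisfies |β − α_i| < 1 for exactly one index i, and for each i the number of roots β of g (counted with multiplicity) with |β −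 α_i| < 1 equals e_i. -/
/-!
Both `f` and `g` have unit leading coefficient and integral coefficients, so all their roots lie
in the closed unit ball, and `‖f(x) - g(x)‖ ≤ c < 1` on that ball. Fix a centre `a`. Evaluating at
`a + t`, where `‖t‖ < 1` exceeds the distance from `a` of every root in the open unit ball around
`a`, each root in that ball contributes `‖t‖` to the product formula and every other root
contributes `1`, so `‖f(a + t)‖ = ‖t‖ ^ m_f` and `‖g(a + t)‖ = ‖t‖ ^ m_g`. Since the value group
of the algebraically closed field `L` is divisible, `t` can be taken with `‖t‖ ^ n > c`; then two
different powers would make `‖f(a + t) - g(a + t)‖ > c`, so `m_f = m_g`.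

For `f` the count around `α i` is `e i` because the `α j` are pairwise at distance `1`; around a
root `β` of `g` it is positive, so some `α i` lies within distance `< 1` of `β`.
-/

open Polynomial Filter Topology

lemma eq_of_norm_sub_lt_one {E ι : Type*} [SeminormedAddGroup E] {α : ι → E}
    (hα : Pairwise fun i j => ‖α i - α j‖ = 1) {i j : ι} (h : ‖α i - α j‖ < 1) : i = j :=
  by_contra fun hij => (hα hij).not_lt h

section Ultrametric

variable {E : Type*} [SeminormedAddCommGroup E] [IsUltrametricDist E]

lemma IsUltrametricDist.norm_sub_le_max (x y : E) : ‖x - y‖ ≤ max ‖x‖ ‖y‖ := by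
  simpa only [sub_eq_add_neg, norm_neg] using norm_add_le_max x (-y)

lemma IsUltrametricDist.norm_sub_eq_max_of_norm_ne_norm {x y : E} (h : ‖x‖ ≠ ‖y‖) :
    ‖x - y‖ = max ‖x‖ ‖y‖ := by
  rw [sub_eq_add_neg, norm_add_eq_max_of_norm_ne_norm (by rwa [norm_neg]), norm_neg]

lemma IsUltrametricDist.norm_eq_of_norm_sub_lt {x y : E} (h : ‖x - y‖ < ‖y‖) : ‖x‖ = ‖y‖ := by
  simpa [max_eq_right h.le] using norm_add_eq_max_of_norm_ne_norm h.ne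

lemma existsUnique_norm_sub_lt_one {ι : Type*} {α : ι → E}
    (hα : Pairwise fun i j => ‖α i - α j‖ = 1) {β : E} {i : ι} (hi : ‖β - α i‖ < 1) :
    ∃! i, ‖β - α i‖ < 1 := by
  refine ⟨i, hi, fun j hj => eq_of_norm_sub_lt_one hα ?_⟩
  calc ‖α j - α i‖ = ‖(β - α i) - (β - α j)‖ := by rw [sub_sub_sub_cancel_left]
    _ ≤ max ‖β - α i‖ ‖β - α j‖ := IsUltrametricDist.norm_sub_le_max _ _
    _ < 1 := max_lt hi hj

end Ultrametric

lemma isUltrametricDist_of_norm_algebraMap {K L : Type*} [NormedField K] [IsUltrametricDist K]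
    [NormedField L] [Algebra K L] (h : ∀ x : K, ‖algebraMap K L x‖ = ‖x‖) :
    IsUltrametricDist L :=
  IsUltrametricDist.isUltrametricDist_of_forall_norm_natCast_le_one fun m => by
    rw [← map_natCast (algebraMap K L), h]
    exact IsUltrametricDist.norm_natCast_le_one K m

lemma IsAlgClosed.exists_lt_norm_lt_one {L : Type*} [NormedField L] [IsAlgClosed L] {x : L}
    (hx : 1 < ‖x‖) {u : ℝ} (hu : u < 1) : ∃ t : L, u < ‖t‖ ∧ ‖t‖ < 1 := by
  obtain ⟨m, hm⟩ := exists_pow_lt_of_lt_one (inv_pos.2 (one_pos.trans hx)) (max_lt hu one_pos)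
  obtain ⟨t, ht⟩ := IsAlgClosed.exists_pow_nat_eq x⁻¹ m.succ_pos
  have htm : ‖t‖ ^ (m + 1) = ‖x‖⁻¹ := by rw [← norm_pow, ht, norm_inv]
  refine ⟨t, (le_max_left u 0).trans_lt (lt_of_pow_lt_pow_left₀ (m + 1) (norm_nonneg t) ?_), ?_⟩
  · rw [htm]
    exact (pow_le_pow_of_le_one (le_max_right u 0) (max_lt hu one_pos).le m.le_succ).trans_lt hm
  · exact (pow_lt_one_iff_of_nonneg (norm_nonneg t) m.succ_ne_zero).1
      (htm ▸ inv_lt_one_of_one_lt₀ hx)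

lemma Multiset.prod_map_ite_eq_pow_card_filter {α M : Type*} [CommMonoid M] (s : Multiset α)
    (p : α → Prop) [DecidablePred p] (a : M) :
    (s.map fun x => if p x then a else 1).prod = a ^ (s.filter p).card := by
  induction s using Multiset.induction_on with
  | empty => simp
  | cons x s ih => by_cases hx : p x <;> simp [hx, ih, pow_succ, mul_comm]

namespace Polynomial

lemma exists_forall_norm_coeff_le_of_forall_lt {R : Type*} [SeminormedRing R] {p : R[X]}
    {r : ℝ} (h : ∀ k, ‖p.coeff k‖ < r) : ∃ c < r, 0 ≤ c ∧ ∀ k, ‖p.coeff k‖ ≤ c := by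
  obtain ⟨k₀, -, hk₀⟩ := (Finset.range (p.natDegree + 1)).exists_max_image (‖p.coeff ·‖)
    Finset.nonempty_range_add_one
  refine ⟨_, h k₀, norm_nonneg _, fun k => ?_⟩
  rcases le_or_gt k p.natDegree with hk | hk
  · exact hk₀ k (Finset.mem_range.2 (Nat.lt_succ_of_le hk))
  · rw [coeff_eq_zero_of_natDegree_lt hk, norm_zero]
    exact norm_nonneg _

lemma card_filter_roots_C_mul_prod_X_sub_C_pow {R ι : Type*} [CommRing R] [IsDomain R]
    {a : R} (ha : a ≠ 0) (s : Finset ι) (α : ι → R) (e : ι → ℕ) (P : R → Prop)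
    [DecidablePred P] :
    ((C a * ∏ i ∈ s, (X - C (α i)) ^ e i).roots.filter P).card =
      ∑ i ∈ s, if P (α i) then e i else 0 := by
  rw [roots_C_mul _ ha, roots_prod _ _ (Finset.prod_ne_zero_iff.2 fun i _ =>
    pow_ne_zero _ (X_sub_C_ne_zero _)), Multiset.filter_bind, Multiset.card_bind]
  refine Finset.sum_congr rfl fun i _ => ?_
  by_cases h : P (α i) <;> simp [Multiset.filter_nsmul, Multiset.filter_singleton, h]

lemma norm_eval_eq_prod_roots {L : Type*} [NormedField L] {p : L[X]} (hp : p.Splits) (x : L) :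
    ‖p.eval x‖ = ‖p.leadingCoeff‖ * (p.roots.map fun β => ‖x - β‖).prod := by
  rw [hp.eval_eq_prod_roots, norm_mul]
  exact congrArg _ (Multiset.prod_hom' p.roots (normHom : L →*₀ ℝ) (x - ·)).symm

section Ultrametric

variable {L : Type*} [NormedField L] [IsUltrametricDist L]

lemma norm_eval_le_of_forall_norm_coeff_le {p : L[X]} {c : ℝ} (hc : 0 ≤ c)
    (h : ∀ k, ‖p.coeff k‖ ≤ c) {x : L} (hx : ‖x‖ ≤ 1) : ‖p.eval x‖ ≤ c := by
  rw [eval_eq_sum_range]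
  refine IsUltrametricDist.norm_sum_le_of_forall_le_of_nonneg hc fun k _ => ?_
  rw [norm_mul, norm_pow]
  exact (mul_le_of_le_one_right (norm_nonneg _) (pow_le_one₀ (norm_nonneg x) hx)).trans (h k)

lemma norm_le_one_of_isRoot {p : L[X]} (hlc : ‖p.leadingCoeff‖ = 1)
    (hcoeff : ∀ k, ‖p.coeff k‖ ≤ 1) {x : L} (hx : p.IsRoot x) : ‖x‖ ≤ 1 := by
  by_contra! hx1
  set N := p.natDegree
  have hlow : ‖∑ k ∈ Finset.range N, p.coeff k * x ^ k‖ < ‖x‖ ^ N := by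
    rcases (Finset.range N).eq_empty_or_nonempty with hN | hN
    · rw [hN, Finset.sum_empty, norm_zero]
      positivity
    obtain ⟨k, hk, hle⟩ := IsUltrametricDist.exists_norm_finsetSum_le_of_nonempty hN
      fun k => p.coeff k * x ^ k
    calc _ ≤ ‖p.coeff k‖ * ‖x‖ ^ k := by rwa [← norm_pow, ← norm_mul]
      _ ≤ ‖x‖ ^ k := mul_le_of_le_one_left (by positivity) (hcoeff k)
      _ < ‖x‖ ^ N := pow_lt_pow_right₀ hx1 (Finset.mem_range.1 hk)
  have hlead : ‖p.coeff N * x ^ N‖ = ‖x‖ ^ N := by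
    rw [norm_mul, norm_pow, ← leadingCoeff, hlc, one_mul]
  have hsplit : p.eval x = ∑ k ∈ Finset.range N, p.coeff k * x ^ k + p.coeff N * x ^ N := by
    rw [eval_eq_sum_range, Finset.sum_range_succ]
  have := IsUltrametricDist.norm_add_eq_max_of_norm_ne_norm (hlow.trans_eq hlead.symm).ne
  rw [← hsplit, hx.eq_zero, norm_zero, hlead, max_eq_right hlow.le] at this
  exact (pow_pos (one_pos.trans hx1) N).ne this

lemma norm_eval_add_eq_pow_card_filter_roots {p : L[X]} (hp : p.Splits)
    (hlc : ‖p.leadingCoeff‖ = 1) {a t : L} (hroots : ∀ β ∈ p.roots, ‖β - a‖ ≤ 1) (ht : ‖t‖ < 1)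
    (hnear : ∀ β ∈ p.roots, ‖β - a‖ < 1 → ‖β - a‖ < ‖t‖) :
    ‖p.eval (a + t)‖ = ‖t‖ ^ (p.roots.filter fun β => ‖β - a‖ < 1).card := by
  rw [norm_eval_eq_prod_roots hp, hlc, one_mul, ← Multiset.prod_map_ite_eq_pow_card_filter]
  refine congrArg _ (Multiset.map_congr rfl fun β hβ => ?_)
  rw [show a + t - β = t - (β - a) by ring]
  split_ifs with h
  · have hlt := hnear β hβ h
    rw [IsUltrametricDist.norm_sub_eq_max_of_norm_ne_norm hlt.ne', max_eq_left hlt.le]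
  · have hone : ‖β - a‖ = 1 := (hroots β hβ).antisymm (not_lt.1 h)
    rw [IsUltrametricDist.norm_sub_eq_max_of_norm_ne_norm (hone ▸ ht.ne), hone,
      max_eq_right ht.le]

variable [IsAlgClosed L] {x : L} {p q : L[X]}

theorem card_filter_roots_norm_sub_lt_one_eq_of_norm_le_one (hx : 1 < ‖x‖)
    (hp : ‖p.leadingCoeff‖ = 1) (hpc : ∀ k, ‖p.coeff k‖ ≤ 1) (hq : ‖q.leadingCoeff‖ = 1)
    (hqc : ∀ k, ‖q.coeff k‖ ≤ 1) (hpq : ∀ k, ‖p.coeff k - q.coeff k‖ < 1) {a : L}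
    (ha : ‖a‖ ≤ 1) :
    (p.roots.filter fun β => ‖β - a‖ < 1).card = (q.roots.filter fun β => ‖β - a‖ < 1).card := by
  obtain ⟨c, hc1, hc0, hc⟩ := exists_forall_norm_coeff_le_of_forall_lt (p := p - q)
    fun k => by simpa only [coeff_sub] using hpq k
  have hev : ∀ᶠ r in 𝓝[<] (1 : ℝ),
      0 < r ∧ c < r ^ q.natDegree ∧ ∀ β ∈ p.roots + q.roots, ‖β - a‖ < 1 → ‖β - a‖ < r := by
    refine nhdsWithin_le_nhds ((eventually_gt_nhds one_pos).and ?_)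
    refine (((continuous_pow _).tendsto 1).eventually (eventually_gt_nhds ?_)).and ?_
    · rwa [one_pow]
    · exact (eventually_all_finite (Multiset.finite_toSet _)).2 fun β _ =>
        eventually_imp_distrib_left.2 eventually_gt_nhds
  obtain ⟨u, hu1, hu⟩ := mem_nhdsLT_iff_exists_Ioo_subset.1 hev
  obtain ⟨t, hut, ht1⟩ := IsAlgClosed.exists_lt_norm_lt_one hx hu1
  obtain ⟨ht0, hct, hnear⟩ := hu ⟨hut, ht1⟩
  have hdist {r : L[X]} (hr : ‖r.leadingCoeff‖ = 1) (hrc : ∀ k, ‖r.coeff k‖ ≤ 1) :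
      ∀ β ∈ r.roots, ‖β - a‖ ≤ 1 := fun β hβ =>
    (IsUltrametricDist.norm_sub_le_max _ _).trans
      (max_le (norm_le_one_of_isRoot hr hrc (isRoot_of_mem_roots hβ)) ha)
  have hpt := norm_eval_add_eq_pow_card_filter_roots (IsAlgClosed.splits p) hp (hdist hp hpc)
    ht1 fun β hβ => hnear β (Multiset.mem_add.2 (.inl hβ))
  have hqt := norm_eval_add_eq_pow_card_filter_roots (IsAlgClosed.splits q) hq (hdist hq hqc)
    ht1 fun β hβ => hnear β (Multiset.mem_add.2 (.inr hβ))
  have hdiff : ‖p.eval (a + t) - q.eval (a + t)‖ ≤ c := by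
    rw [← eval_sub]
    exact norm_eval_le_of_forall_norm_coeff_le hc0 hc
      ((IsUltrametricDist.norm_add_le_max _ _).trans (max_le ha ht1.le))
  have hqN : ‖t‖ ^ q.natDegree ≤ ‖q.eval (a + t)‖ := by
    rw [hqt]
    exact pow_le_pow_of_le_one (norm_nonneg t) ht1.le
      ((Multiset.card_le_card (Multiset.filter_le _ _)).trans (card_roots' q))
  have heq := IsUltrametricDist.norm_eq_of_norm_sub_lt (hdiff.trans_lt (hct.trans_le hqN))
  rw [hpt, hqt] at heq
  exact (pow_right_strictAnti₀ ht0 ht1).injective heq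

theorem card_filter_roots_norm_sub_lt_one_eq (hx : 1 < ‖x‖)
    (hp : ‖p.leadingCoeff‖ = 1) (hpc : ∀ k, ‖p.coeff k‖ ≤ 1) (hq : ‖q.leadingCoeff‖ = 1)
    (hpq : ∀ k, ‖p.coeff k - q.coeff k‖ < 1) (a : L) :
    (p.roots.filter fun β => ‖β - a‖ < 1).card = (q.roots.filter fun β => ‖β - a‖ < 1).card := by
  have hqc (k : ℕ) : ‖q.coeff k‖ ≤ 1 := by
    simpa only [sub_sub_cancel] using (IsUltrametricDist.norm_sub_le_max _ _).trans
      (max_le (hpc k) (hpq k).le)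
  by_cases ha : ‖a‖ ≤ 1
  · exact card_filter_roots_norm_sub_lt_one_eq_of_norm_le_one hx hp hpc hq hqc hpq ha
  -- all roots lie in the closed unit ball, which is disjoint from the open unit ball around `a`
  have hfar {r : L[X]} (hr : ‖r.leadingCoeff‖ = 1) (hrc : ∀ k, ‖r.coeff k‖ ≤ 1) :
      r.roots.filter (fun β => ‖β - a‖ < 1) = 0 := by
    refine Multiset.filter_eq_nil.2 fun β hβ => ?_
    have hlt := (norm_le_one_of_isRoot hr hrc (isRoot_of_mem_roots hβ)).trans_lt (not_le.1 ha)
    rw [IsUltrametricDist.norm_sub_eq_max_of_norm_ne_norm hlt.ne, max_eq_right hlt.le]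
    exact not_lt.2 (not_le.1 ha).le
  rw [hfar hp hpc, hfar hq hqc]

end Ultrametric

end Polynomial

theorem roots_of_nearby_polynomial_general
    (K L : Type*) [NontriviallyNormedField K] [IsUltrametricDist K]
    [NormedField L] [Algebra K L] [IsAlgClosed L]
    (hext : ∀ x : K, ‖algebraMap K L x‖ = ‖x‖)
    (n s : ℕ) (f g : Polynomial K) (α : Fin s → K) (e : Fin s → ℕ)
    (hf : f = C f.leadingCoeff * ∏ i, (X - C (α i)) ^ e i)
    (hdegf : f.natDegree = n)
    (hlead : ‖f.leadingCoeff‖ = 1)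
    (hcoeff : ∀ k, ‖f.coeff k‖ ≤ 1)
    (hapart : ∀ i j, i ≠ j → ‖α i - α j‖ = 1)
    (hdegg : g.natDegree = n)
    (hclose : ∀ k, ‖f.coeff k - g.coeff k‖ < 1) :
    (∀ β ∈ (g.map (algebraMap K L)).roots,
        ∃! i : Fin s, ‖β - algebraMap K L (α i)‖ < 1) ∧
      ∀ i : Fin s,
        (Multiset.filter (fun β => ‖β - algebraMap K L (α i)‖ < 1)
            (g.map (algebraMap K L)).roots).card = e i := by
  have := isUltrametricDist_of_norm_algebraMap hext
  set φ := algebraMap K L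
  obtain ⟨x, hx⟩ := NormedField.exists_one_lt_norm K
  have hfn : ‖f.coeff n‖ = 1 := hdegf ▸ hlead
  have hglead : ‖g.leadingCoeff‖ = 1 := by
    rw [leadingCoeff, hdegg, ← hfn]
    exact IsUltrametricDist.norm_eq_of_norm_sub_lt (by rw [norm_sub_rev, hfn]; exact hclose n)
  have hapartL : Pairwise fun i j => ‖φ (α i) - φ (α j)‖ = 1 := fun i j hij => by
    simp only [← map_sub, hext, hapart i j hij]
  have hfcount (a : L) : ((f.map φ).roots.filter fun β => ‖β - a‖ < 1).card =
      ∑ j, if ‖φ (α j) - a‖ < 1 then e j else 0 := by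
    rw [hf, Polynomial.map_mul, map_C, Polynomial.map_prod]
    simp only [Polynomial.map_pow, Polynomial.map_sub, map_X, map_C]
    exact card_filter_roots_C_mul_prod_X_sub_C_pow
      (by rw [← norm_ne_zero_iff, hext, hlead]; exact one_ne_zero) _ _ _ _
  have hcount (a : L) : ((g.map φ).roots.filter fun β => ‖β - a‖ < 1).card =
      ∑ j, if ‖φ (α j) - a‖ < 1 then e j else 0 := by
    rw [← hfcount]
    exact (card_filter_roots_norm_sub_lt_one_eq (x := φ x) (by rwa [hext])
      (by rwa [leadingCoeff_map, hext]) (fun k => by rw [coeff_map, hext]; exact hcoeff k)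
      (by rwa [leadingCoeff_map, hext])
      (fun k => by rw [coeff_map, coeff_map, ← map_sub, hext]; exact hclose k) a).symm
  refine ⟨fun β hβ => ?_, fun i => ?_⟩
  · have hpos : (∑ j, if ‖φ (α j) - β‖ < 1 then e j else 0) ≠ 0 := by
      rw [← hcount, ← Nat.pos_iff_ne_zero, Multiset.card_pos_iff_exists_mem]
      exact ⟨β, Multiset.mem_filter.2 ⟨hβ, by simp⟩⟩
    obtain ⟨j, -, hj⟩ := Finset.exists_ne_zero_of_sum_ne_zero hpos
    exact existsUnique_norm_sub_lt_one hapartL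
      (by rw [norm_sub_rev]; exact (ite_ne_right_iff.1 hj).1 : ‖β - φ (α j)‖ < 1)
  · rw [hcount, Finset.sum_eq_single i
      (fun j _ hji => if_neg (mt (eq_of_norm_sub_lt_one hapartL) hji)) (by simp), if_pos (by simp)]

/-- **Continuity of roots over a complete non-archimedean field.**
Let `K` be complete non-archimedean of characteristic `0`, and `f ∈ K[T]` of degree `n`
with `‖leading coeff‖ = 1`, all coefficients of norm `≤ 1`, and all roots in `K`: the
distinct roots are `α i` (`i : Fin s`) with multiplicities `e i`, so that
`f = lc · ∏ (T - α i)^(e i)`.  Assume `‖α i - α j‖ = 1` for `i ≠ j` and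
`‖f^{(e i)}(α i)/(e i)!‖ = 1` for all `i`.  Let `g` be of degree `n` with `‖f - g‖ < 1`
coefficientwise.  Then, in an algebraically closed normed extension `L` of `K` (extending
the absolute value), every root `β` of `g` satisfies `‖β - α i‖ < 1` for exactly one `i`,
and for each `i` the number of roots `β` of `g` (with multiplicity) with `‖β - α i‖ < 1`
is `e i`. -/
theorem roots_of_nearby_polynomial
    (K L : Type*) [NontriviallyNormedField K] [CompleteSpace K] [IsUltrametricDist K]
    [CharZero K] [NormedField L] [Algebra K L] [IsAlgClosed L]
    (hext : ∀ x : K, ‖algebraMap K L x‖ = ‖x‖)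
    (n s : ℕ) (f g : Polynomial K) (α : Fin s → K) (e : Fin s → ℕ)
    (hf : f = C f.leadingCoeff * ∏ i, (X - C (α i)) ^ e i)
    (hdegf : f.natDegree = n)
    (hlead : ‖f.leadingCoeff‖ = 1)
    (hcoeff : ∀ k, ‖f.coeff k‖ ≤ 1)
    (hapart : ∀ i j, i ≠ j → ‖α i - α j‖ = 1)
    (hderiv : ∀ i, ‖(Polynomial.derivative^[e i] f).eval (α i) / ((e i).factorial : K)‖ = 1)
    (hdegg : g.natDegree = n) (hgn : g.coeff n ≠ 0)
    (hclose : ∀ k, ‖f.coeff k - g.coeff k‖ < 1) :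
    (∀ β ∈ (g.map (algebraMap K L)).roots,
        ∃! i : Fin s, ‖β - algebraMap K L (α i)‖ < 1) ∧
      ∀ i : Fin s,
        (Multiset.filter (fun β => ‖β - algebraMap K L (α i)‖ < 1)
            (g.map (algebraMap K L)).roots).card = e i :=
  roots_of_nearby_polynomial_general K L hext n s f g α e hf hdegf hlead hcoeff hapart hdegg hclose
end

section
/- Let K be a number field of degree d, let m ≥ 1, and let Δ(T) ∈ 𝒪_K[T] be a monic polynomial of degree m. There exists a constant κ ≥ 1 (depending only on K and Δ) such that for every 0 < ε ≤ 1 and every τ ∈ 𝒪_K with Δ(τ) ≠ 0 and size(τ) := max_{v|∞} |τ|_v ≥ κ·ε^{−m−1}, there are at most m finite places v of K satisfying Nv ≥ (ε·size(τ))^d and |Δ(τ)|_v < 1. -/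
open NumberField IsDedekindDomain Polynomial

/-!
Writing `|N(Δ(τ))|` as the product of the archimedean absolute values of `Δ(τ)` bounds it by
`C · size(τ)^{md}`, since `Δ` has degree `m`. On the other hand, distinct primes `v ∋ Δ(τ)` are coprime, so the product of their norms divides
`N(Δ(τ))`; if `m + 1` of them had `Nv ≥ (ε · size τ)^d`, this product would be at least
`(ε · size τ)^{d(m+1)} = (ε^{m+1} · size τ)^d · size(τ)^{md} ≥ κ^d · size(τ)^{md}`, which exceeds
the upper bound once `κ > C`.
-/

theorem AbsoluteValue.eval_le_sum_coeff_mul_max_pow {R : Type*} [Semiring R] [Nontrivial R]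
    (abv : AbsoluteValue R ℝ) (p : R[X]) (x : R) :
    abv (p.eval x) ≤
      (∑ i ∈ Finset.range (p.natDegree + 1), abv (p.coeff i)) * max 1 (abv x) ^ p.natDegree := by
  rw [eval_eq_sum_range, Finset.sum_mul]
  refine (abv.sum_le _ _).trans (Finset.sum_le_sum fun i hi => ?_)
  rw [abv.map_mul, abv.map_pow]
  gcongr
  calc abv x ^ i ≤ max 1 (abv x) ^ i := by gcongr; exact le_max_right _ _
    _ ≤ max 1 (abv x) ^ p.natDegree :=
      pow_le_pow_right₀ (le_max_left _ _) (Nat.lt_succ_iff.mp (Finset.mem_range.mp hi))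

theorem IsDedekindDomain.HeightOneSpectrum.prod_absNorm_le_absNorm {R : Type*} [CommRing R]
    [IsDedekindDomain R] [Module.Free ℤ R] [Module.Finite ℤ R] {I : Ideal R} (hI : I ≠ ⊥)
    (F : Finset (HeightOneSpectrum R)) (hF : ∀ v ∈ F, I ≤ v.asIdeal) :
    ∏ v ∈ F, Ideal.absNorm v.asIdeal ≤ Ideal.absNorm I := by
  have hdvd : ∏ v ∈ F, v.asIdeal ∣ I :=
    Finset.prod_dvd_of_coprime
      (fun v _ w _ hvw => Ideal.isCoprime_iff_sup_eq.mpr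
        (v.isMaximal.coprime_of_ne w.isMaximal (mt HeightOneSpectrum.ext hvw)))
      fun v hv => Ideal.dvd_iff_le.mpr (hF v hv)
  rw [← map_prod]
  exact Nat.le_of_dvd (Nat.pos_of_ne_zero (Ideal.absNorm_eq_zero_iff.not.mpr hI)) (map_dvd _ hdvd)

theorem IsDedekindDomain.HeightOneSpectrum.finite_setOf_mem_asIdeal {R : Type*} [CommRing R]
    [IsDedekindDomain R] {a : R} (ha : a ≠ 0) :
    {v : HeightOneSpectrum R | a ∈ v.asIdeal}.Finite := by
  simpa only [Ideal.dvd_span_singleton] using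
    Ideal.finite_factors (I := Ideal.span {a}) (by simpa [Ideal.span_singleton_eq_bot] using ha)

namespace NumberField

variable {K : Type*} [Field K] [NumberField K]

noncomputable def normEvalBound (P : K[X]) : ℝ :=
  ∏ w : InfinitePlace K, (∑ i ∈ Finset.range (P.natDegree + 1), w (P.coeff i)) ^ w.mult

theorem normEvalBound_nonneg (P : K[X]) : 0 ≤ normEvalBound P :=
  Finset.prod_nonneg fun w _ => pow_nonneg (Finset.sum_nonneg fun _ _ => w.1.nonneg _) _

theorem abs_norm_eval_le (P : K[X]) {x : K} {s : ℝ} (hs : 1 ≤ s)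
    (hx : ∀ w : InfinitePlace K, w x ≤ s) :
    |(Algebra.norm ℚ (P.eval x) : ℝ)| ≤
      normEvalBound P * s ^ (P.natDegree * Module.finrank ℚ K) := by
  rw [← Rat.cast_abs, ← InfinitePlace.prod_eq_abs_norm]
  calc ∏ w : InfinitePlace K, w (P.eval x) ^ w.mult
      ≤ ∏ w : InfinitePlace K,
          ((∑ i ∈ Finset.range (P.natDegree + 1), w (P.coeff i)) * s ^ P.natDegree) ^ w.mult := by
        gcongr with w
        refine (w.1.eval_le_sum_coeff_mul_max_pow P x).trans ?_
        gcongr _ * ?_ ^ _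
        exact max_le hs (hx w)
    _ = normEvalBound P * s ^ (P.natDegree * Module.finrank ℚ K) := by
        simp_rw [mul_pow, ← pow_mul]
        rw [Finset.prod_mul_distrib, Finset.prod_pow_eq_pow_sum, ← Finset.mul_sum,
          InfinitePlace.sum_mult_eq]
        rfl

theorem absNorm_span_singleton_eq_abs_norm (a : 𝓞 K) :
    (Ideal.absNorm (Ideal.span {a}) : ℝ) = |(Algebra.norm ℚ (a : K) : ℝ)| := by
  rw [Ideal.absNorm_span_singleton, Nat.cast_natAbs, ← Algebra.coe_norm_int]
  push_cast
  rfl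

theorem pow_ncard_le_abs_norm {a : 𝓞 K} (ha : a ≠ 0) {L : ℝ} (hL : 0 ≤ L) :
    L ^ {v : HeightOneSpectrum (𝓞 K) | L ≤ Ideal.absNorm v.asIdeal ∧ a ∈ v.asIdeal}.ncard ≤
      |(Algebra.norm ℚ (a : K) : ℝ)| := by
  set S := {v : HeightOneSpectrum (𝓞 K) | L ≤ Ideal.absNorm v.asIdeal ∧ a ∈ v.asIdeal}
  have hS : S.Finite := (HeightOneSpectrum.finite_setOf_mem_asIdeal ha).subset fun _ hv => hv.2
  have hspan : Ideal.span {a} ≠ ⊥ := by simpa [Ideal.span_singleton_eq_bot] using ha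
  rw [Set.ncard_eq_toFinset_card S hS, ← absNorm_span_singleton_eq_abs_norm]
  calc L ^ hS.toFinset.card ≤ ∏ v ∈ hS.toFinset, (Ideal.absNorm v.asIdeal : ℝ) := by
        rw [← Finset.prod_const]
        exact Finset.prod_le_prod (fun _ _ => hL) fun v hv => (hS.mem_toFinset.mp hv).1
    _ ≤ Ideal.absNorm (Ideal.span {a}) := by
        exact_mod_cast HeightOneSpectrum.prod_absNorm_le_absNorm hspan _ fun v hv =>
          (Ideal.span_singleton_le_iff_mem _).mpr (hS.mem_toFinset.mp hv).2

end NumberField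

theorem one_le_mul_of_mul_inv_pow_le {κ ε s : ℝ} {n : ℕ} (hκ : 1 ≤ κ) (hε : 0 < ε)
    (hε1 : ε ≤ 1) (hs : κ * ε⁻¹ ^ (n + 1) ≤ s) : 1 ≤ ε * s := by
  have hεn : 1 ≤ ε⁻¹ ^ n := one_le_pow₀ ((one_le_inv₀ hε).mpr hε1)
  calc 1 ≤ κ * ε⁻¹ ^ n := one_le_mul_of_one_le_of_one_le hκ hεn
    _ = ε * (κ * ε⁻¹ ^ (n + 1)) := by rw [pow_succ]; field_simp
    _ ≤ ε * s := by gcongr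

theorem mul_pow_lt_pow_pow_of_le {C ε s : ℝ} {m d : ℕ} (hC : 0 ≤ C) (hε : 0 < ε)
    (hd : d ≠ 0) (hs : (C + 1) * ε⁻¹ ^ (m + 1) ≤ s) :
    C * s ^ (m * d) < ((ε * s) ^ d) ^ (m + 1) := by
  have ht : C + 1 ≤ ε ^ (m + 1) * s := by
    calc C + 1 = ε ^ (m + 1) * ((C + 1) * ε⁻¹ ^ (m + 1)) := by
          rw [mul_left_comm, ← mul_pow, mul_inv_cancel₀ hε.ne', one_pow, mul_one]
      _ ≤ ε ^ (m + 1) * s := by gcongr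
  have hs0 : 0 < s := (by positivity : 0 < (C + 1) * ε⁻¹ ^ (m + 1)).trans_le hs
  calc C * s ^ (m * d) < (ε ^ (m + 1) * s) ^ d * s ^ (m * d) := by
        gcongr
        exact (lt_add_one C).trans_le (ht.trans (le_self_pow₀ (by linarith) hd))
    _ = ((ε * s) ^ d) ^ (m + 1) := by ring

theorem few_large_ramified_places_general
    (K : Type*) [Field K] [NumberField K]
    (m : ℕ) (Δ : Polynomial (𝓞 K)) (hΔdeg : Δ.natDegree = m) :
    ∃ κ : ℝ, 1 ≤ κ ∧
      ∀ ε : ℝ, 0 < ε → ε ≤ 1 →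
        ∀ τ : 𝓞 K, Δ.eval τ ≠ 0 →
          κ * ε⁻¹ ^ (m + 1) ≤ (⨆ v : InfinitePlace K, v (algebraMap (𝓞 K) K τ)) →
            {v : HeightOneSpectrum (𝓞 K) |
                (ε * ⨆ w : InfinitePlace K, w (algebraMap (𝓞 K) K τ)) ^
                    (Module.finrank ℚ K) ≤ (Ideal.absNorm v.asIdeal : ℝ) ∧
                  Δ.eval τ ∈ v.asIdeal}.Finite ∧
              {v : HeightOneSpectrum (𝓞 K) |
                  (ε * ⨆ w : InfinitePlace K, w (algebraMap (𝓞 K) K τ)) ^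
                      (Module.finrank ℚ K) ≤ (Ideal.absNorm v.asIdeal : ℝ) ∧
                    Δ.eval τ ∈ v.asIdeal}.ncard ≤ m := by
  set P : K[X] := Δ.map (algebraMap (𝓞 K) K)
  have hP : P.natDegree = m := by
    rw [natDegree_map_eq_of_injective RingOfIntegers.coe_injective, hΔdeg]
  have hC := normEvalBound_nonneg P
  refine ⟨normEvalBound P + 1, by linarith, fun ε hε hε1 τ hτ hs => ?_⟩
  set s := ⨆ w : InfinitePlace K, w (algebraMap (𝓞 K) K τ)
  set d := Module.finrank ℚ K
  have hεs : 1 ≤ ε * s := one_le_mul_of_mul_inv_pow_le (by linarith) hε hε1 hs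
  have hs1 : 1 ≤ s := hεs.trans (mul_le_of_le_one_left (by nlinarith) hε1)
  have hnorm : |(Algebra.norm ℚ ((Δ.eval τ : 𝓞 K) : K) : ℝ)| ≤ normEvalBound P * s ^ (m * d) := by
    have heval : ((Δ.eval τ : 𝓞 K) : K) = P.eval (algebraMap (𝓞 K) K τ) := by
      rw [eval_map, eval₂_at_apply]
    rw [heval, ← hP]
    exact abs_norm_eval_le P hs1 fun w =>
      le_ciSup (f := fun w : InfinitePlace K => w (algebraMap (𝓞 K) K τ))
        (Set.finite_range _).bddAbove w
  have hlarge := mul_pow_lt_pow_pow_of_le (d := d) hC hε Module.finrank_pos.ne' hs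
  have hcount := pow_ncard_le_abs_norm hτ (L := (ε * s) ^ d) (by positivity)
  refine ⟨(HeightOneSpectrum.finite_setOf_mem_asIdeal hτ).subset fun _ hv => hv.2, ?_⟩
  by_contra! hm
  have hmono : ((ε * s) ^ d) ^ (m + 1) ≤ ((ε * s) ^ d) ^ _ :=
    pow_le_pow_right₀ (one_le_pow₀ hεs) hm
  linarith

/-- Let `K` be a number field of degree `d`, `m ≥ 1`, and `Δ ∈ 𝒪_K[T]` monic of degree `m`.
There is a constant `κ ≥ 1` (depending only on `K` and `Δ`) such that for every
`0 < ε ≤ 1` and every `τ ∈ 𝒪_K` with `Δ(τ) ≠ 0` and `size τ ≥ κ·ε^{-m-1}`, there are at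
most `m` finite places `v` of `K` with `Nv ≥ (ε·size τ)^d` and `|Δ(τ)|_v < 1` (i.e.
`Δ(τ) ∈ 𝔭_v`).  Here `size τ = max_{v|∞} |τ|_v`. -/
theorem few_large_ramified_places
    (K : Type*) [Field K] [NumberField K]
    (m : ℕ) (hm : 1 ≤ m) (Δ : Polynomial (𝓞 K)) (hΔ : Δ.Monic) (hΔdeg : Δ.natDegree = m) :
    ∃ κ : ℝ, 1 ≤ κ ∧
      ∀ ε : ℝ, 0 < ε → ε ≤ 1 →
        ∀ τ : 𝓞 K, Δ.eval τ ≠ 0 →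
          κ * ε⁻¹ ^ (m + 1) ≤ (⨆ v : InfinitePlace K, v (algebraMap (𝓞 K) K τ)) →
            {v : HeightOneSpectrum (𝓞 K) |
                (ε * ⨆ w : InfinitePlace K, w (algebraMap (𝓞 K) K τ)) ^
                    (Module.finrank ℚ K) ≤ (Ideal.absNorm v.asIdeal : ℝ) ∧
                  Δ.eval τ ∈ v.asIdeal}.Finite ∧
              {v : HeightOneSpectrum (𝓞 K) |
                  (ε * ⨆ w : InfinitePlace K, w (algebraMap (𝓞 K) K τ)) ^
                      (Module.finrank ℚ K) ≤ (Ideal.absNorm v.asIdeal : ℝ) ∧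
                    Δ.eval τ ∈ v.asIdeal}.ncard ≤ m :=
  few_large_ramified_places_general K m Δ hΔdeg
end
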